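/- arXiv:1911.06176 — 10 statements merged into one kernel-verified Lean document; each statement's English description precedes it below -/
import Mathlib

section
/- Let H be a real Hilbert space and L₁,…,L_K closed subspaces with ⋂ₖ Lₖ = {0}. Suppose the infimum ρ = inf{ maxₖ dist(x, Lₖ) : x ∈ H, ‖x‖ = 1 } is positive. If the sequence (xₙ) is defined by remotest projections, i.e. x_{n+1} = P_{i(n)} xₙ where i(n) maximizes dist(xₙ, Lₖ) over k, then ‖xₙ‖ ≤ ‖x₀‖ (1 - ρ²)^{n/2} for all n. -/
open RealInnerProductSpace

private lemma pyth_aux {H : Type*} [NormedAddCommGroup H] [InnerProductSpace ℝ H]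
    (L : Submodule ℝ H) [CompleteSpace L] (v : H) :
    ‖v‖ ^ 2 = ‖(Submodule.orthogonalProjectionOnto L v : H)‖ ^ 2 + ‖v - Submodule.orthogonalProjectionOnto L v‖ ^ 2 := by
  have h : ⟪(Submodule.orthogonalProjectionOnto L v : H), v - Submodule.orthogonalProjectionOnto L v⟫ = 0 := by
    rw [real_inner_comm]
    exact Submodule.starProjection_inner_eq_zero v _ (Submodule.orthogonalProjectionOnto L v).2
  have := norm_add_sq_real (Submodule.orthogonalProjectionOnto L v : H) (v - Submodule.orthogonalProjectionOnto L v)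
  simp only [add_sub_cancel, h, mul_zero, add_zero] at this
  linarith

theorem remotest_projections_exponential_rate
    {H : Type*} [NormedAddCommGroup H] [InnerProductSpace ℝ H] [CompleteSpace H]
    {K : ℕ} (hK : 0 < K) (L : Fin K → Submodule ℝ H)
    (hclosed : ∀ k, IsClosed ((L k : Set H)))
    [∀ k, CompleteSpace (L k)]
    (hint : ⨅ k, L k = ⊥)
    (ρ : ℝ)
    (hρdef : ρ = ⨅ x : {x : H // ‖x‖ = 1},
      ⨆ k : Fin K, ‖(x : H) - (Submodule.orthogonalProjectionOnto (L k) (x : H) : H)‖)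
    (hρ : 0 < ρ)
    (x : ℕ → H) (i : ℕ → Fin K)
    (hrec : ∀ n, x (n + 1) = (Submodule.orthogonalProjectionOnto (L (i n)) (x n) : H))
    (hmax : ∀ n, ∀ k : Fin K,
      ‖x n - (Submodule.orthogonalProjectionOnto (L k) (x n) : H)‖ ≤
        ‖x n - (Submodule.orthogonalProjectionOnto (L (i n)) (x n) : H)‖) :
    ∀ n : ℕ, ‖x n‖ ≤ ‖x 0‖ * Real.sqrt ((1 - ρ ^ 2) ^ n) := by
  haveI : Nonempty (Fin K) := ⟨⟨0, hK⟩⟩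
  -- a lower bound helper: for every unit vector, the sup of distances is ≥ ρ
  have hbdd : BddBelow (Set.range fun x : {x : H // ‖x‖ = 1} =>
      ⨆ k : Fin K, ‖(x : H) - (Submodule.orthogonalProjectionOnto (L k) (x : H) : H)‖) := by
    refine ⟨0, ?_⟩
    rintro _ ⟨u, rfl⟩
    exact le_ciSup_of_le (Set.Finite.bddAbove (Set.finite_range _)) (Classical.arbitrary _)
      (norm_nonneg _)
  have hρle : ∀ u : {x : H // ‖x‖ = 1},
      ρ ≤ ⨆ k : Fin K, ‖(u : H) - (Submodule.orthogonalProjectionOnto (L k) (u : H) : H)‖ := by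
    intro u
    rw [hρdef]
    exact ciInf_le hbdd u
  -- ρ ≤ 1
  have hsphere : Nonempty {x : H // ‖x‖ = 1} := by
    by_contra h
    rw [not_nonempty_iff] at h
    rw [hρdef, Real.iInf_of_isEmpty] at hρ
    exact lt_irrefl 0 hρ
  have hρ1 : ρ ≤ 1 := by
    obtain ⟨u⟩ := hsphere
    refine (hρle u).trans (ciSup_le fun k => ?_)
    have hp := pyth_aux (L k) (u : H)
    have h2 : ‖(u : H) - Submodule.orthogonalProjectionOnto (L k) (u : H)‖ ^ 2 ≤ 1 ^ 2 := by
      have := sq_nonneg ‖(Submodule.orthogonalProjectionOnto (L k) (u : H) : H)‖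
      rw [u.2] at hp; nlinarith
    nlinarith [norm_nonneg ((u : H) - Submodule.orthogonalProjectionOnto (L k) (u : H))]
  have h1ρ : (0:ℝ) ≤ 1 - ρ ^ 2 := by nlinarith
  -- one-step estimate on squares
  have hstep : ∀ n, ‖x (n+1)‖ ^ 2 ≤ (1 - ρ ^ 2) * ‖x n‖ ^ 2 := by
    intro n
    by_cases hz : x n = 0
    · have : x (n+1) = 0 := by rw [hrec n, hz]; simp
      rw [this, hz]; simp
    · set c := ‖x n‖ with hc
      have hcpos : 0 < c := norm_pos_iff.mpr hz
      set u : {x : H // ‖x‖ = 1} := ⟨c⁻¹ • x n, by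
        rw [norm_smul, norm_inv, norm_norm, inv_mul_cancel₀ hcpos.ne']⟩ with hu
      have hkey : ∀ k : Fin K, ‖(u : H) - (Submodule.orthogonalProjectionOnto (L k) (u : H) : H)‖
          = c⁻¹ * ‖x n - (Submodule.orthogonalProjectionOnto (L k) (x n) : H)‖ := by
        intro k
        have : (Submodule.orthogonalProjectionOnto (L k) ((c⁻¹ • x n) : H) : H)
            = c⁻¹ • (Submodule.orthogonalProjectionOnto (L k) (x n) : H) := by
          rw [map_smul]; rfl
        simp only [hu, this]
        rw [← smul_sub, norm_smul, norm_inv, norm_norm]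
      have hsup : (⨆ k : Fin K, ‖(u : H) - (Submodule.orthogonalProjectionOnto (L k) (u : H) : H)‖)
          ≤ c⁻¹ * ‖x n - (Submodule.orthogonalProjectionOnto (L (i n)) (x n) : H)‖ := by
        refine ciSup_le fun k => ?_
        rw [hkey k]
        exact mul_le_mul_of_nonneg_left (hmax n k) (by positivity)
      have hlow : ρ * c ≤ ‖x n - (Submodule.orthogonalProjectionOnto (L (i n)) (x n) : H)‖ := by
        have := (hρle u).trans hsup
        calc ρ * c ≤ (c⁻¹ * ‖x n - (Submodule.orthogonalProjectionOnto (L (i n)) (x n) : H)‖) * c :=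
              mul_le_mul_of_nonneg_right this hcpos.le
          _ = _ := by field_simp
      have hp := pyth_aux (L (i n)) (x n)
      rw [hrec n]
      have hd : (ρ * c) ^ 2 ≤ ‖x n - (Submodule.orthogonalProjectionOnto (L (i n)) (x n) : H)‖ ^ 2 := by
        have : 0 ≤ ρ * c := by positivity
        nlinarith
      nlinarith
  -- induction
  intro n
  induction n with
  | zero => simp
  | succ n ih =>
    have h1 : ‖x (n+1)‖ ≤ Real.sqrt (1 - ρ ^ 2) * ‖x n‖ := by
      have := Real.sqrt_le_sqrt (hstep n)
      rwa [Real.sqrt_sq (norm_nonneg _), Real.sqrt_mul h1ρ, Real.sqrt_sq (norm_nonneg _)] at this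
    calc ‖x (n+1)‖ ≤ Real.sqrt (1 - ρ ^ 2) * ‖x n‖ := h1
      _ ≤ Real.sqrt (1 - ρ ^ 2) * (‖x 0‖ * Real.sqrt ((1 - ρ ^ 2) ^ n)) :=
          mul_le_mul_of_nonneg_left ih (Real.sqrt_nonneg _)
      _ = ‖x 0‖ * Real.sqrt ((1 - ρ ^ 2) ^ (n+1)) := by
          rw [pow_succ (1 - ρ ^ 2) n, Real.sqrt_mul (pow_nonneg h1ρ n)]
          ring
end

section
/- Let L₁,…,L_K be closed subspaces of a real Hilbert space H and y = y₁ + ⋯ + y_K with yⱼ ∈ Lⱼ^⊥, y ≠ 0. Define ρ(y) = (sup over unit vectors g in (L₁^⊥ ∪ ⋯ ∪ L_K^⊥) of ⟨y, g⟩) / ‖y‖. Then ρ(y) ≥ ‖y‖ / (‖y₁‖ + ⋯ + ‖y_K‖). -/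
/-! Write `s` for the supremum. Each `yⱼ / ‖yⱼ‖` is a unit vector of `Lⱼᗮ`, so
`⟪y, yⱼ⟫ ≤ s ‖yⱼ‖`; summing over `j` gives `‖y‖² ≤ s ∑ ‖yⱼ‖`, and `‖y‖ ≤ ∑ ‖yⱼ‖` lets us divide. -/

open RealInnerProductSpace

section UnitInnerSup

variable {H : Type*} [NormedAddCommGroup H] [InnerProductSpace ℝ H]

lemma bddAbove_inner_unit (P : H → Prop) (x : H) :
    BddAbove {r : ℝ | ∃ g : H, ‖g‖ = 1 ∧ P g ∧ r = ⟪x, g⟫} := by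
  refine ⟨‖x‖, ?_⟩
  rintro _ ⟨g, hg, -, rfl⟩
  simpa [hg] using real_inner_le_norm x g

lemma inner_le_sSup_inner_unit_mul_norm {P : H → Prop} (x : H) {v : H}
    (hv : P (‖v‖⁻¹ • v)) :
    ⟪x, v⟫ ≤ sSup {r : ℝ | ∃ g : H, ‖g‖ = 1 ∧ P g ∧ r = ⟪x, g⟫} * ‖v‖ := by
  rcases eq_or_ne v 0 with rfl | hv0
  · simp
  have hnorm : ‖v‖ ≠ 0 := norm_ne_zero_iff.mpr hv0
  have hmem : ⟪x, ‖v‖⁻¹ • v⟫ ∈ {r : ℝ | ∃ g : H, ‖g‖ = 1 ∧ P g ∧ r = ⟪x, g⟫} :=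
    ⟨‖v‖⁻¹ • v, by simp [norm_smul, hnorm], hv, rfl⟩
  calc ⟪x, v⟫ = ⟪x, ‖v‖⁻¹ • v⟫ * ‖v‖ := by
        rw [real_inner_smul_right, mul_comm, ← mul_assoc, mul_inv_cancel₀ hnorm, one_mul]
    _ ≤ _ := by
        gcongr
        exact le_csSup (bddAbove_inner_unit P x) hmem

end UnitInnerSup

lemma norm_sum_sq_le_mul_sum_norm {H ι : Type*} [NormedAddCommGroup H] [InnerProductSpace ℝ H]
    (s : Finset ι) (y : ι → H) {c : ℝ} (h : ∀ j ∈ s, ⟪∑ i ∈ s, y i, y j⟫ ≤ c * ‖y j‖) :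
    ‖∑ i ∈ s, y i‖ ^ 2 ≤ c * ∑ j ∈ s, ‖y j‖ := by
  rw [← real_inner_self_eq_norm_sq, inner_sum, Finset.mul_sum]
  exact Finset.sum_le_sum h

lemma div_le_div_of_sq_le_mul {α : Type*} [Field α] [LinearOrder α] [IsStrictOrderedRing α]
    {a b c : α} (ha : 0 ≤ a) (hab : a ≤ b) (h : a ^ 2 ≤ c * b) : a / b ≤ c / a := by
  rcases ha.eq_or_lt with rfl | ha
  · simp
  rw [div_le_div_iff₀ (ha.trans_le hab) ha]
  nlinarith

theorem rho_ge_norm_div_sum_norms_general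
    {H : Type*} [NormedAddCommGroup H] [InnerProductSpace ℝ H]
    {K : ℕ} (L : Fin K → Submodule ℝ H)
    (y : Fin K → H) (hy : ∀ j, y j ∈ (L j)ᗮ) :
    sSup {r : ℝ | ∃ g : H, ‖g‖ = 1 ∧ (∃ j, g ∈ (L j)ᗮ) ∧ r = (inner ℝ (∑ j, y j) g : ℝ)} /
        ‖∑ j, y j‖ ≥
      ‖∑ j, y j‖ / ∑ j, ‖y j‖ := by
  have hsq := norm_sum_sq_le_mul_sum_norm Finset.univ y fun j _ ↦
    inner_le_sSup_inner_unit_mul_norm (P := fun g ↦ ∃ j, g ∈ (L j)ᗮ) (∑ i, y i)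
      ⟨j, (L j)ᗮ.smul_mem _ (hy j)⟩
  exact div_le_div_of_sq_le_mul (norm_nonneg _) (norm_sum_le _ _) hsq

theorem rho_ge_norm_div_sum_norms
    {H : Type*} [NormedAddCommGroup H] [InnerProductSpace ℝ H] [CompleteSpace H]
    {K : ℕ} (L : Fin K → Submodule ℝ H)
    (hclosed : ∀ k, IsClosed ((L k : Set H)))
    (y : Fin K → H) (hy : ∀ j, y j ∈ (L j)ᗮ)
    (hne : (∑ j, y j) ≠ 0) :
    sSup {r : ℝ | ∃ g : H, ‖g‖ = 1 ∧ (∃ j, g ∈ (L j)ᗮ) ∧ r = (inner ℝ (∑ j, y j) g : ℝ)} /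
        ‖∑ j, y j‖ ≥
      ‖∑ j, y j‖ / ∑ j, ‖y j‖ :=
  rho_ge_norm_div_sum_norms_general L y hy
end

section
/- Let D be a subset of the unit sphere of a real Hilbert space H whose closed linear span is H, and suppose ρ(D) = inf_{‖x‖=1} sup_{g∈D} |⟨x,g⟩| > 0. Let (tₖ) be a sequence in (0,1] and let (xₙ) satisfy x_{n+1} = xₙ - ⟨xₙ, g_{n+1}⟩ g_{n+1} where g_{n+1} ∈ D satisfies |⟨xₙ, g_{n+1}⟩| ≥ t_{n+1} sup_{g∈D} |⟨xₙ, g⟩|. Then ‖xₙ‖² ≤ ‖x₀‖² ∏_{k=1}^{n} (1 - tₖ² ρ(D)²) for all n. -/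
/-!
Each step removes the component of `xₙ` along the unit vector `gₙ₊₁`, so
`‖xₙ₊₁‖² = ‖xₙ‖² - ⟨xₙ, gₙ₊₁⟩²`. Normalising `xₙ` in the definition of `ρ(D)` gives
`ρ(D) ‖xₙ‖ ≤ sup_{g ∈ D} |⟨xₙ, g⟩| ≤ |⟨xₙ, gₙ₊₁⟩| / tₙ₊₁`, hence
`‖xₙ₊₁‖² ≤ (1 - tₙ₊₁² ρ(D)²) ‖xₙ‖²`, and the factors are nonnegative because `0 ≤ ρ(D) ≤ 1`.
-/

open Finset

section

variable {H : Type*} [NormedAddCommGroup H] [InnerProductSpace ℝ H]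

theorem le_mul_prod_Icc_of_le_mul {R : Type*} [CommSemiring R] [PartialOrder R]
    [IsOrderedRing R] {a r : ℕ → R} (hr : ∀ n, 0 ≤ r (n + 1))
    (hstep : ∀ n, a (n + 1) ≤ a n * r (n + 1)) (n : ℕ) :
    a n ≤ a 0 * ∏ k ∈ Icc 1 n, r k := by
  induction n with
  | zero => simp
  | succ n ih =>
    calc a (n + 1) ≤ a n * r (n + 1) := hstep n
      _ ≤ (a 0 * ∏ k ∈ Icc 1 n, r k) * r (n + 1) := mul_le_mul_of_nonneg_right ih (hr n)
      _ = a 0 * ∏ k ∈ Icc 1 (n + 1), r k := by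
        rw [prod_Icc_succ_top (Nat.le_add_left 1 n), mul_assoc]

theorem norm_sub_inner_smul_sq_of_norm_eq_one {u : H} (hu : ‖u‖ = 1) (x : H) :
    ‖x - inner ℝ x u • u‖ ^ 2 = ‖x‖ ^ 2 - inner ℝ x u ^ 2 := by
  rw [norm_sub_sq_real, real_inner_smul_right, norm_smul, Real.norm_eq_abs, hu, mul_one, sq_abs]
  ring

/-- The constant `ρ(D)` of the dictionary `D`. -/
noncomputable def normingConstant (D : Set H) : ℝ :=
  ⨅ x : {x : H // ‖x‖ = 1}, ⨆ g : D, |(inner ℝ (x : H) (g : H) : ℝ)|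

theorem normingConstant_nonneg (D : Set H) : 0 ≤ normingConstant D :=
  Real.iInf_nonneg fun _ => Real.iSup_nonneg fun _ => abs_nonneg _

theorem normingConstant_mul_norm_le {D : Set H} {y : H} {c : ℝ} (hc : 0 ≤ c)
    (hy : ∀ g ∈ D, |(inner ℝ y g : ℝ)| ≤ c) : normingConstant D * ‖y‖ ≤ c := by
  rcases eq_or_ne y 0 with rfl | hy0
  · simpa using hc
  have hpos : 0 < ‖y‖ := norm_pos_iff.mpr hy0
  have hunit : ‖‖y‖⁻¹ • y‖ = 1 := by
    rw [norm_smul, norm_inv, norm_norm, inv_mul_cancel₀ hpos.ne']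
  have hbdd : BddBelow (Set.range fun x : {x : H // ‖x‖ = 1} =>
      ⨆ g : D, |(inner ℝ (x : H) (g : H) : ℝ)|) :=
    ⟨0, by rintro _ ⟨_, rfl⟩; exact Real.iSup_nonneg fun _ => abs_nonneg _⟩
  have hsup : (⨆ g : D, |(inner ℝ (‖y‖⁻¹ • y) (g : H) : ℝ)|) ≤ c / ‖y‖ := by
    refine Real.iSup_le (fun g => ?_) (div_nonneg hc hpos.le)
    rw [real_inner_smul_left, abs_mul, abs_inv, abs_norm, inv_mul_eq_div]
    exact div_le_div_of_nonneg_right (hy g g.2) hpos.le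
  rw [← le_div_iff₀ hpos]
  exact (ciInf_le hbdd ⟨_, hunit⟩).trans hsup

theorem normingConstant_le_one {D : Set H} (hD : ∀ g ∈ D, ‖g‖ ≤ 1) :
    normingConstant D ≤ 1 := by
  rcases subsingleton_or_nontrivial H with hH | hH
  · have : IsEmpty {x : H // ‖x‖ = 1} :=
      ⟨fun ⟨y, hy⟩ => by simp [Subsingleton.elim y 0] at hy⟩
    simp [normingConstant, Real.iInf_of_isEmpty]
  obtain ⟨y, hy⟩ := exists_norm_eq H zero_le_one
  have := normingConstant_mul_norm_le (D := D) zero_le_one fun g hg =>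
    (abs_real_inner_le_norm y g).trans (by rw [hy, one_mul]; exact hD g hg)
  rwa [hy, mul_one] at this

theorem norm_sub_inner_smul_sq_le_of_weak_greedy {D : Set H} {x u : H} {τ : ℝ} (hu : ‖u‖ = 1)
    (hτ : 0 < τ) (hweak : ∀ h ∈ D, τ * |(inner ℝ x h : ℝ)| ≤ |(inner ℝ x u : ℝ)|) :
    ‖x - inner ℝ x u • u‖ ^ 2 ≤ ‖x‖ ^ 2 * (1 - τ ^ 2 * normingConstant D ^ 2) := by
  have hlower : τ * normingConstant D * ‖x‖ ≤ |(inner ℝ x u : ℝ)| := by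
    have := normingConstant_mul_norm_le (D := D) (y := x)
      (div_nonneg (abs_nonneg _) hτ.le) fun h hh => (le_div_iff₀' hτ).mpr (hweak h hh)
    rw [mul_assoc, ← le_div_iff₀' hτ]
    exact this
  have hsq : (τ * normingConstant D * ‖x‖) ^ 2 ≤ inner ℝ x u ^ 2 := by
    rw [← sq_abs (inner ℝ x u)]
    exact pow_le_pow_left₀ (by positivity [normingConstant_nonneg D]) hlower 2
  rw [norm_sub_inner_smul_sq_of_norm_eq_one hu]
  nlinarith

end

theorem weak_greedy_exponential_rate_general
    {H : Type*} [NormedAddCommGroup H] [InnerProductSpace ℝ H]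
    (D : Set H) (hD : ∀ g ∈ D, ‖g‖ = 1)
    (ρ : ℝ)
    (hρdef : ρ = ⨅ x : {x : H // ‖x‖ = 1}, ⨆ g : D, |(inner ℝ (x : H) (g : H) : ℝ)|)
    (t : ℕ → ℝ) (ht : ∀ k, t k ∈ Set.Ioc (0 : ℝ) 1)
    (x : ℕ → H) (g : ℕ → H) (hg : ∀ n, g (n + 1) ∈ D)
    (hrec : ∀ n, x (n + 1) = x n - (inner ℝ (x n) (g (n + 1)) : ℝ) • g (n + 1))
    (hweak : ∀ n, ∀ h ∈ D,
      t (n + 1) * |(inner ℝ (x n) h : ℝ)| ≤ |(inner ℝ (x n) (g (n + 1)) : ℝ)|) :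
    ∀ n : ℕ, ‖x n‖ ^ 2 ≤ ‖x 0‖ ^ 2 * ∏ k ∈ Finset.Icc 1 n, (1 - t k ^ 2 * ρ ^ 2) := by
  change ρ = normingConstant D at hρdef
  subst hρdef
  have hρ0 := normingConstant_nonneg D
  have hρ1 := normingConstant_le_one fun g hg => (hD g hg).le
  have hfactor (k : ℕ) : 0 ≤ 1 - t k ^ 2 * normingConstant D ^ 2 := by
    have htρ : t k * normingConstant D ≤ 1 := mul_le_one₀ (ht k).2 hρ0 hρ1
    nlinarith [mul_nonneg (ht k).1.le hρ0]
  refine le_mul_prod_Icc_of_le_mul (fun n => hfactor (n + 1)) fun n => ?_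
  rw [hrec n]
  exact norm_sub_inner_smul_sq_le_of_weak_greedy (hD _ (hg n)) (ht (n + 1)).1 (hweak n)

theorem weak_greedy_exponential_rate
    {H : Type*} [NormedAddCommGroup H] [InnerProductSpace ℝ H] [CompleteSpace H]
    (D : Set H) (hD : ∀ g ∈ D, ‖g‖ = 1)
    (hspan : (Submodule.span ℝ D).topologicalClosure = ⊤)
    (ρ : ℝ)
    (hρdef : ρ = ⨅ x : {x : H // ‖x‖ = 1}, ⨆ g : D, |(inner ℝ (x : H) (g : H) : ℝ)|)
    (hρ : 0 < ρ)
    (t : ℕ → ℝ) (ht : ∀ k, t k ∈ Set.Ioc (0 : ℝ) 1)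
    (x : ℕ → H) (g : ℕ → H) (hg : ∀ n, g (n + 1) ∈ D)
    (hrec : ∀ n, x (n + 1) = x n - (inner ℝ (x n) (g (n + 1)) : ℝ) • g (n + 1))
    (hweak : ∀ n, ∀ h ∈ D,
      t (n + 1) * |(inner ℝ (x n) h : ℝ)| ≤ |(inner ℝ (x n) (g (n + 1)) : ℝ)|) :
    ∀ n : ℕ, ‖x n‖ ^ 2 ≤ ‖x 0‖ ^ 2 * ∏ k ∈ Finset.Icc 1 n, (1 - t k ^ 2 * ρ ^ 2) :=
  weak_greedy_exponential_rate_general D hD ρ hρdef t ht x g hg hrec hweak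
end

section
/- Let D be a subset of the unit sphere of an infinite-dimensional real Hilbert space H with closed linear span equal to H. If ρ(D) := inf_{‖x‖=1} sup_{g∈D} |⟨x,g⟩| = 0, then there exists an orthonormal sequence (wₙ) in H such that sup_{g∈D} |⟨wₙ, g⟩| → 0 as n → ∞. -/
/-!
Choose unit vectors `xₙ` with `sup_{g ∈ D} |⟪xₙ, g⟫| → 0`. Then `⟪xₙ, g⟫ → 0` for every `g ∈ D`,
and since the `xₙ` are bounded this persists on the closed span of `D`, which is `H`: the `xₙ`
tend weakly to zero. Hence their projections onto a finite-dimensional subspace `K` tend to zero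
in norm, and normalising `xₙ` minus its projection gives unit vectors orthogonal to `K` on which
the supremum is as small as we like. Choosing such vectors one after another, each orthogonal to
the previous ones, gives the orthonormal sequence.
-/

open Filter Topology
open scoped RealInnerProductSpace NNReal

section

variable {H : Type*} [NormedAddCommGroup H] [InnerProductSpace ℝ H]

noncomputable def supAbsInner (D : Set H) (x : H) : ℝ := ⨆ g : D, |⟪x, (g : H)⟫|

lemma supAbsInner_nonneg (D : Set H) (x : H) : 0 ≤ supAbsInner D x :=
  Real.iSup_nonneg fun _ => abs_nonneg _

lemma abs_inner_le_norm_of_norm_le_one {g : H} (hg : ‖g‖ ≤ 1) (x : H) : |⟪x, g⟫| ≤ ‖x‖ :=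
  (abs_real_inner_le_norm x g).trans (mul_le_of_le_one_right (norm_nonneg x) hg)

section supAbsInner

variable {D : Set H}

lemma abs_inner_le_supAbsInner (hD : ∀ g ∈ D, ‖g‖ ≤ 1) (x : H) {g : H} (hg : g ∈ D) :
    |⟪x, g⟫| ≤ supAbsInner D x :=
  le_ciSup (f := fun g : D => |⟪x, (g : H)⟫|)
    ⟨‖x‖, by rintro _ ⟨g, rfl⟩; exact abs_inner_le_norm_of_norm_le_one (hD g g.2) x⟩ ⟨g, hg⟩

lemma supAbsInner_le_norm (hD : ∀ g ∈ D, ‖g‖ ≤ 1) (x : H) : supAbsInner D x ≤ ‖x‖ :=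
  Real.iSup_le (fun g => abs_inner_le_norm_of_norm_le_one (hD g g.2) x) (norm_nonneg x)

lemma supAbsInner_sub_le (hD : ∀ g ∈ D, ‖g‖ ≤ 1) (x y : H) :
    supAbsInner D (x - y) ≤ supAbsInner D x + supAbsInner D y := by
  refine Real.iSup_le (fun g => ?_) (add_nonneg (supAbsInner_nonneg D x) (supAbsInner_nonneg D y))
  rw [inner_sub_left]
  exact (abs_sub _ _).trans
    (add_le_add (abs_inner_le_supAbsInner hD x g.2) (abs_inner_le_supAbsInner hD y g.2))

lemma supAbsInner_smul (c : ℝ) (x : H) : supAbsInner D (c • x) = |c| * supAbsInner D x := by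
  simp only [supAbsInner, real_inner_smul_left, abs_mul, Real.mul_iSup_of_nonneg (abs_nonneg c)]

end supAbsInner

def weakNullSubmodule {ι : Type*} (l : Filter ι) (x : ι → H) : Submodule ℝ H where
  carrier := {v | Tendsto (fun i => ⟪x i, v⟫) l (𝓝 0)}
  add_mem' {u v} hu hv := by
    simpa only [Set.mem_ofPred_eq, inner_add_right, add_zero] using hu.add hv
  zero_mem' := by simpa only [Set.mem_ofPred_eq, inner_zero_right] using tendsto_const_nhds
  smul_mem' c v hv := by
    simpa only [Set.mem_ofPred_eq, inner_smul_right, mul_zero] using hv.const_mul c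

lemma isClosed_weakNullSubmodule {ι : Type*} (l : Filter ι) {x : ι → H} {C : ℝ≥0}
    (hx : ∀ i, ‖x i‖ ≤ C) : IsClosed (weakNullSubmodule l x : Set H) := by
  have hlip (i : ι) : LipschitzWith C (fun v => ⟪x i, v⟫) :=
    (innerSL ℝ (x i)).lipschitz.weaken (by simpa [← NNReal.coe_le_coe] using hx i)
  exact (LipschitzWith.uniformEquicontinuous _ C hlip).equicontinuous.isClosed_setOfPred_tendsto
    continuous_const

lemma tendsto_starProjection_of_forall_tendsto_inner {ι : Type*} {l : Filter ι} {x : ι → H}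
    (K : Submodule ℝ H) [FiniteDimensional ℝ K]
    (hx : ∀ v, Tendsto (fun i => ⟪x i, v⟫) l (𝓝 0)) :
    Tendsto (fun i => K.starProjection (x i)) l (𝓝 0) := by
  let b := stdOrthonormalBasis ℝ K
  have hsum (i : ι) : K.starProjection (x i) = ∑ j, ⟪x i, b j⟫ • (b j : H) := by
    simp [b.starProjection_eq_sum_rankOne, real_inner_comm]
  simpa only [hsum, zero_smul, Finset.sum_const_zero] using
    tendsto_finsetSum Finset.univ fun j _ => (hx (b j)).smul_const (b j : H)

lemma tendsto_inner_of_tendsto_supAbsInner {D : Set H} (hD : ∀ g ∈ D, ‖g‖ ≤ 1)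
    (hspan : (Submodule.span ℝ D).topologicalClosure = ⊤) {ι : Type*} {l : Filter ι}
    {x : ι → H} {C : ℝ≥0} (hx : ∀ i, ‖x i‖ ≤ C)
    (hS : Tendsto (fun i => supAbsInner D (x i)) l (𝓝 0)) (v : H) :
    Tendsto (fun i => ⟪x i, v⟫) l (𝓝 0) := by
  have hD_le : D ⊆ weakNullSubmodule l x := fun g hg =>
    squeeze_zero_norm (fun i => (abs_inner_le_supAbsInner hD (x i) hg)) hS
  have hspan_le : (Submodule.span ℝ D).topologicalClosure ≤ weakNullSubmodule l x :=
    Submodule.topologicalClosure_minimal _ (Submodule.span_le.2 hD_le)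
      (isClosed_weakNullSubmodule l hx)
  exact hspan_le (hspan ▸ Submodule.mem_top)

lemma exists_seq_norm_eq_one_tendsto_supAbsInner [Nontrivial H] {D : Set H}
    (hρ : (⨅ x : {x : H // ‖x‖ = 1}, supAbsInner D x) = 0) :
    ∃ x : ℕ → H, (∀ n, ‖x n‖ = 1) ∧ Tendsto (fun n => supAbsInner D (x n)) atTop (𝓝 0) := by
  obtain ⟨x₀, hx₀⟩ := exists_norm_eq H zero_le_one
  have : Nonempty {x : H // ‖x‖ = 1} := ⟨⟨x₀, hx₀⟩⟩
  have hsmall (n : ℕ) : ∃ x : {x : H // ‖x‖ = 1}, supAbsInner D x < 1 / (n + 1) :=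
    exists_lt_of_ciInf_lt (hρ ▸ Nat.one_div_pos_of_nat)
  choose x hx using hsmall
  exact ⟨fun n => x n, fun n => (x n).2, squeeze_zero (fun n => supAbsInner_nonneg D _)
    (fun n => (hx n).le) tendsto_one_div_add_atTop_nhds_zero_nat⟩

lemma exists_mem_orthogonal_norm_eq_one_supAbsInner_le {D : Set H} (hD : ∀ g ∈ D, ‖g‖ ≤ 1)
    {x : ℕ → H} (hx : ∀ n, ‖x n‖ = 1)
    (hS : Tendsto (fun n => supAbsInner D (x n)) atTop (𝓝 0))
    (hweak : ∀ v, Tendsto (fun n => ⟪x n, v⟫) atTop (𝓝 0))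
    (K : Submodule ℝ H) [FiniteDimensional ℝ K] {ε : ℝ} (hε : 0 < ε) :
    ∃ z ∈ Kᗮ, ‖z‖ = 1 ∧ supAbsInner D z ≤ ε := by
  set y := fun n => x n - K.starProjection (x n)
  have hP := tendsto_zero_iff_norm_tendsto_zero.1
    (tendsto_starProjection_of_forall_tendsto_inner K hweak)
  have hy_norm : Tendsto (fun n => ‖y n‖) atTop (𝓝 1) := by
    refine tendsto_iff_norm_sub_tendsto_zero.2 (squeeze_zero_norm (fun n => ?_) hP)
    simpa [y, ← hx n] using abs_norm_sub_norm_le (y n) (x n)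
  have hy_S : Tendsto (fun n => supAbsInner D (y n)) atTop (𝓝 0) := by
    refine squeeze_zero (fun n => supAbsInner_nonneg D _) (fun n => ?_)
      (by simpa using hS.add hP)
    exact (supAbsInner_sub_le hD _ _).trans (add_le_add_right (supAbsInner_le_norm hD _) _)
  have hz_S : Tendsto (fun n => ‖y n‖⁻¹ * supAbsInner D (y n)) atTop (𝓝 0) := by
    simpa using (hy_norm.inv₀ one_ne_zero).mul hy_S
  obtain ⟨n, hyn, hSn⟩ :=
    ((hy_norm.eventually_ne one_ne_zero).and (hz_S.eventually (ge_mem_nhds hε))).exists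
  refine ⟨‖y n‖⁻¹ • y n, Kᗮ.smul_mem _ (K.sub_starProjection_mem_orthogonal _),
    norm_smul_inv_norm (norm_ne_zero_iff.1 hyn), ?_⟩
  rwa [supAbsInner_smul, abs_inv, abs_norm]

lemma exists_orthonormal_seq_forall_le_one_div_succ (f : H → ℝ)
    (h : ∀ (K : Submodule ℝ H), FiniteDimensional ℝ K → ∀ ε > 0, ∃ z ∈ Kᗮ, ‖z‖ = 1 ∧ f z ≤ ε) :
    ∃ w : ℕ → H, Orthonormal ℝ w ∧ ∀ n, f (w n) ≤ 1 / (n + 1) := by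
  -- The first coordinate of a pair `(k, z)` records the bound `f z ≤ 1 / (k + 1)` to be met.
  let P : ℕ × H → Prop := fun p => ‖p.2‖ = 1 ∧ f p.2 ≤ 1 / (p.1 + 1)
  let r : ℕ × H → ℕ × H → Prop := fun p q => p.1 < q.1 ∧ ⟪p.2, q.2⟫ = 0
  have hstep (s : Finset (ℕ × H)) (_ : ∀ p ∈ s, P p) : ∃ q, P q ∧ ∀ p ∈ s, r p q := by
    let K := Submodule.span ℝ (Prod.snd '' (s : Set (ℕ × H)))
    have : FiniteDimensional ℝ K := FiniteDimensional.span_of_finite ℝ (s.finite_toSet.image _)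
    obtain ⟨z, hzK, hz, hfz⟩ := h K this _ (Nat.one_div_pos_of_nat (n := s.sup Prod.fst + 1))
    refine ⟨(s.sup Prod.fst + 1, z), ⟨hz, by exact_mod_cast hfz⟩, fun p hp => ⟨?_, ?_⟩⟩
    · exact Nat.lt_succ_of_le (Finset.le_sup (f := Prod.fst) hp)
    · exact K.inner_right_of_mem_orthogonal (Submodule.subset_span ⟨p, hp, rfl⟩) hzK
  obtain ⟨q, hP, hr⟩ := exists_seq_of_forall_finset_exists P r hstep
  have hmono : StrictMono fun n => (q n).1 := fun m n hmn => (hr m n hmn).1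
  refine ⟨fun n => (q n).2, ⟨fun n => (hP n).1, fun m n hmn => ?_⟩, fun n => ?_⟩
  · rcases hmn.lt_or_gt with hlt | hlt
    · exact (hr m n hlt).2
    · rw [real_inner_comm]; exact (hr n m hlt).2
  · refine (hP n).2.trans (one_div_le_one_div_of_le (by positivity) ?_)
    exact_mod_cast Nat.add_le_add_right (hmono.id_le n) 1

end

theorem exists_orthonormal_seq_of_rho_eq_zero_general
    {H : Type*} [NormedAddCommGroup H] [InnerProductSpace ℝ H]
    (hinf : ¬ FiniteDimensional ℝ H)
    (D : Set H) (hD : ∀ g ∈ D, ‖g‖ = 1)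
    (hspan : (Submodule.span ℝ D).topologicalClosure = ⊤)
    (hρ : (⨅ x : {x : H // ‖x‖ = 1}, ⨆ g : D, |(inner ℝ (x : H) (g : H) : ℝ)|) = 0) :
    ∃ w : ℕ → H, Orthonormal ℝ w ∧
      Filter.Tendsto (fun n => ⨆ g : D, |(inner ℝ (w n) (g : H) : ℝ)|)
        Filter.atTop (nhds 0) := by
  -- In the zero space `hρ` holds trivially: an empty infimum is `0` in `ℝ`.
  have : Nontrivial H := by
    contrapose! hinf
    infer_instance
  have hD_le : ∀ g ∈ D, ‖g‖ ≤ 1 := fun g hg => (hD g hg).le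
  obtain ⟨x, hx, hS⟩ := exists_seq_norm_eq_one_tendsto_supAbsInner hρ
  have hweak := tendsto_inner_of_tendsto_supAbsInner hD_le hspan (C := 1) (fun n => (hx n).le) hS
  obtain ⟨w, hw, hwS⟩ := exists_orthonormal_seq_forall_le_one_div_succ (supAbsInner D)
    fun K _ ε hε => exists_mem_orthogonal_norm_eq_one_supAbsInner_le hD_le hx hS hweak K hε
  exact ⟨w, hw, squeeze_zero (fun n => supAbsInner_nonneg D _) hwS
    tendsto_one_div_add_atTop_nhds_zero_nat⟩

theorem exists_orthonormal_seq_of_rho_eq_zero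
    {H : Type*} [NormedAddCommGroup H] [InnerProductSpace ℝ H] [CompleteSpace H]
    (hinf : ¬ FiniteDimensional ℝ H)
    (D : Set H) (hD : ∀ g ∈ D, ‖g‖ = 1)
    (hspan : (Submodule.span ℝ D).topologicalClosure = ⊤)
    (hρ : (⨅ x : {x : H // ‖x‖ = 1}, ⨆ g : D, |(inner ℝ (x : H) (g : H) : ℝ)|) = 0) :
    ∃ w : ℕ → H, Orthonormal ℝ w ∧
      Filter.Tendsto (fun n => ⨆ g : D, |(inner ℝ (w n) (g : H) : ℝ)|)
        Filter.atTop (nhds 0) :=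
  exists_orthonormal_seq_of_rho_eq_zero_general hinf D hD hspan hρ
end

section
/- Let L₁,…,L_K be closed subspaces of a real Hilbert space H with L₁^⊥ + ⋯ + L_K^⊥ = H (every element is a finite sum of elements of the complements). Then ρ(D_L) := inf_{‖x‖=1} sup{ |⟨x,g⟩| : g a unit vector in some Lⱼ^⊥ } > 0. -/
/-!
By the open mapping theorem, applied to the summation map `∏ⱼ Lⱼᗮ → H`, every `x` splits as
`x = ∑ⱼ yⱼ` with `yⱼ ∈ Lⱼᗮ` and `‖yⱼ‖ ≤ C ‖x‖`. If `s` bounds `|⟪x, g⟫|` over the unit vectors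
`g` of all the `Lⱼᗮ`, then `|⟪x, yⱼ⟫| ≤ s ‖yⱼ‖`, so `‖x‖² = ∑ⱼ ⟪x, yⱼ⟫ ≤ K C ‖x‖ s`.
For unit `x` this gives `s ≥ 1 / (K C)`.
-/

open scoped InnerProductSpace

theorem Submodule.exists_sum_eq_norm_le {𝕜 E ι : Type*} [NontriviallyNormedField 𝕜]
    [NormedAddCommGroup E] [NormedSpace 𝕜 E] [CompleteSpace E] [Fintype ι]
    (V : ι → Submodule 𝕜 E) (hV : ∀ i, IsClosed (V i : Set E))
    (hsum : ∀ x : E, ∃ f : ι → E, (∀ i, f i ∈ V i) ∧ x = ∑ i, f i) :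
    ∃ C > 0, ∀ x : E, ∃ f : ι → E, (∀ i, f i ∈ V i) ∧ x = ∑ i, f i ∧ ∀ i, ‖f i‖ ≤ C * ‖x‖ := by
  have := fun i => (hV i).completeSpace_coe
  let T : (∀ i, V i) →L[𝕜] E := ∑ i, (V i).subtypeL.comp (ContinuousLinearMap.proj i)
  have hT : ∀ y, T y = ∑ i, (y i : E) := fun y => by simp [T]
  obtain ⟨C, hC, hpre⟩ := T.exists_preimage_norm_le fun x => by
    obtain ⟨f, hf, rfl⟩ := hsum x
    exact ⟨fun i => ⟨f i, hf i⟩, hT _⟩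
  refine ⟨C, hC, fun x => ?_⟩
  obtain ⟨y, rfl, hy⟩ := hpre x
  exact ⟨fun i => y i, fun i => (y i).2, hT y, fun i => (norm_le_pi_norm y i).trans hy⟩

section Real

variable {H : Type*} [NormedAddCommGroup H] [InnerProductSpace ℝ H]

theorem Submodule.abs_inner_le_mul_norm_of_forall_norm_eq_one {W : Submodule ℝ H} {x : H} {s : ℝ}
    (hs : ∀ g ∈ W, ‖g‖ = 1 → |⟪x, g⟫_ℝ| ≤ s) {y : H} (hy : y ∈ W) :
    |⟪x, y⟫_ℝ| ≤ s * ‖y‖ := by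
  rcases eq_or_ne y 0 with rfl | hy0
  · simp
  have h := hs (‖y‖⁻¹ • y) (W.smul_mem _ hy) (norm_smul_inv_norm hy0)
  rwa [real_inner_smul_right, abs_mul, abs_inv, abs_norm,
    inv_mul_le_iff₀ (norm_pos_iff.2 hy0), mul_comm] at h

theorem norm_sq_le_of_eq_sum_of_forall_norm_eq_one {ι : Type*} [Fintype ι]
    {V : ι → Submodule ℝ H} {x : H} {y : ι → H} {C s : ℝ}
    (hyV : ∀ i, y i ∈ V i) (hx : x = ∑ i, y i) (hy : ∀ i, ‖y i‖ ≤ C * ‖x‖) (hs0 : 0 ≤ s)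
    (hs : ∀ i, ∀ g ∈ V i, ‖g‖ = 1 → |⟪x, g⟫_ℝ| ≤ s) :
    ‖x‖ ^ 2 ≤ Fintype.card ι * C * ‖x‖ * s :=
  calc ‖x‖ ^ 2 = ⟪x, ∑ i, y i⟫_ℝ := by rw [← hx, real_inner_self_eq_norm_sq]
    _ = ∑ i, ⟪x, y i⟫_ℝ := inner_sum _ _ _
    _ ≤ ∑ _i, s * (C * ‖x‖) := Finset.sum_le_sum fun i _ =>
        (le_abs_self _).trans <|
          ((V i).abs_inner_le_mul_norm_of_forall_norm_eq_one (hs i) (hyV i)).trans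
            (mul_le_mul_of_nonneg_left (hy i) hs0)
    _ = Fintype.card ι * C * ‖x‖ * s := by
        rw [Finset.sum_const, Finset.card_univ, nsmul_eq_mul]; ring

end Real

theorem rho_pos_of_sum_of_orthocomplements_eq_top_general
    {H : Type*} [NormedAddCommGroup H] [InnerProductSpace ℝ H] [CompleteSpace H]
    [Nontrivial H]
    {K : ℕ} (L : Fin K → Submodule ℝ H)
    (hsum : ∀ x : H, ∃ f : Fin K → H, (∀ j, f j ∈ (L j)ᗮ) ∧ x = ∑ j, f j) :
    0 < ⨅ x : {x : H // ‖x‖ = 1},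
      sSup {r : ℝ | ∃ g : H, ‖g‖ = 1 ∧ (∃ j, g ∈ (L j)ᗮ) ∧
        r = |(inner ℝ (x : H) g : ℝ)|} := by
  obtain ⟨C, hC, hdec⟩ :=
    Submodule.exists_sum_eq_norm_le _ (fun j => (L j).isClosed_orthogonal) hsum
  obtain ⟨x₀, hx₀⟩ := exists_ne (0 : H)
  have hK : 0 < K := Nat.pos_of_ne_zero fun hK => by
    subst hK
    obtain ⟨f, -, rfl⟩ := hsum x₀
    simp at hx₀
  have : Nonempty {x : H // ‖x‖ = 1} := ⟨⟨‖x₀‖⁻¹ • x₀, norm_smul_inv_norm hx₀⟩⟩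
  have hKC : 0 < (K : ℝ) * C := mul_pos (Nat.cast_pos.2 hK) hC
  refine (inv_pos.2 hKC).trans_le (le_ciInf fun ⟨x, hx⟩ => ?_)
  have hbdd : BddAbove {r : ℝ | ∃ g : H, ‖g‖ = 1 ∧ (∃ j, g ∈ (L j)ᗮ) ∧
      r = |(inner ℝ x g : ℝ)|} :=
    ⟨‖x‖, by rintro _ ⟨g, hg, -, rfl⟩; simpa [hg] using abs_real_inner_le_norm x g⟩
  obtain ⟨y, hyL, hxy, hy⟩ := hdec x
  have h := norm_sq_le_of_eq_sum_of_forall_norm_eq_one hyL hxy hy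
    (Real.sSup_nonneg <| by rintro _ ⟨g, -, -, rfl⟩; exact abs_nonneg _)
    (fun j g hg hg1 => le_csSup hbdd ⟨g, hg1, ⟨j, hg⟩, rfl⟩)
  rw [hx, Fintype.card_fin] at h
  rw [inv_le_iff_one_le_mul₀ hKC]
  linarith

theorem rho_pos_of_sum_of_orthocomplements_eq_top
    {H : Type*} [NormedAddCommGroup H] [InnerProductSpace ℝ H] [CompleteSpace H]
    [Nontrivial H]
    {K : ℕ} (L : Fin K → Submodule ℝ H)
    (hclosed : ∀ k, IsClosed ((L k : Set H)))
    (hsum : ∀ x : H, ∃ f : Fin K → H, (∀ j, f j ∈ (L j)ᗮ) ∧ x = ∑ j, f j) :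
    0 < ⨅ x : {x : H // ‖x‖ = 1},
      sSup {r : ℝ | ∃ g : H, ‖g‖ = 1 ∧ (∃ j, g ∈ (L j)ᗮ) ∧
        r = |(inner ℝ (x : H) g : ℝ)|} :=
  rho_pos_of_sum_of_orthocomplements_eq_top_general L hsum
end

section
/- Let D be a subset of the unit sphere of a real Hilbert space H such that every element of H is a finite linear combination of elements of D. Then ρ(D) := inf_{‖x‖=1} sup_{g∈D} |⟨x,g⟩| > 0. -/
set_option synthInstance.maxHeartbeats 400000
set_option maxHeartbeats 800000

theorem rho_pos_of_span_eq_top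
    {H : Type*} [NormedAddCommGroup H] [InnerProductSpace ℝ H] [CompleteSpace H]
    [Nontrivial H]
    (D : Set H) (hD : ∀ g ∈ D, ‖g‖ = 1)
    (hspan : Submodule.span ℝ D = ⊤) :
    0 < ⨅ x : {x : H // ‖x‖ = 1}, ⨆ g : D, |(inner ℝ (x : H) (g : H) : ℝ)| := by
  -- D is nonempty
  have hDne : D.Nonempty := by
    rcases Set.eq_empty_or_nonempty D with h | h
    · exfalso
      rw [h, Submodule.span_empty] at hspan
      exact absurd hspan.symm (by simp [(bot_lt_top (α := Submodule ℝ H)).ne])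
    · exact h
  haveI : Nonempty D := hDne.to_subtype
  -- there is a unit vector
  obtain ⟨v, hv⟩ := exists_ne (0 : H)
  haveI : Nonempty {x : H // ‖x‖ = 1} := ⟨⟨‖v‖⁻¹ • v, by
    rw [norm_smul, norm_inv, norm_norm, inv_mul_cancel₀ (norm_ne_zero_iff.mpr hv)]⟩⟩
  set ε : {x : H // ‖x‖ = 1} → ℝ := fun x => ⨆ g : D, |(inner ℝ (x : H) (g : H) : ℝ)| with hε
  -- boundedness of the family of inner products
  have hbdd : ∀ x : {x : H // ‖x‖ = 1}, BddAbove (Set.range fun g : D => |(inner ℝ (x : H) (g : H) : ℝ)|) := by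
    intro x
    refine ⟨1, ?_⟩
    rintro _ ⟨g, rfl⟩
    calc |(inner ℝ (x : H) (g : H) : ℝ)| ≤ ‖(x : H)‖ * ‖(g : H)‖ := abs_real_inner_le_norm _ _
    _ = 1 := by rw [x.2, hD g g.2, one_mul]
  have hle : ∀ (x : {x : H // ‖x‖ = 1}) (g : D), |(inner ℝ (x : H) (g : H) : ℝ)| ≤ ε x :=
    fun x g => le_ciSup (hbdd x) g
  -- ε x > 0 for each unit x
  have hεpos : ∀ x : {x : H // ‖x‖ = 1}, 0 < ε x := by
    intro x
    rcases lt_or_ge 0 (ε x) with h | h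
    · exact h
    · exfalso
      have hzero : ∀ g ∈ D, (inner ℝ (x : H) g : ℝ) = 0 := by
        intro g hg
        have := (hle x ⟨g, hg⟩).trans h
        have := abs_nonneg ((inner ℝ (x : H) g : ℝ))
        have : |(inner ℝ (x : H) g : ℝ)| = 0 := le_antisymm ‹_› ‹_›
        exact abs_eq_zero.mp this
      have hall : ∀ y : H, (inner ℝ (x : H) y : ℝ) = 0 := by
        intro y
        have hy : y ∈ Submodule.span ℝ D := hspan ▸ Submodule.mem_top
        induction hy using Submodule.span_induction with
        | mem g hg => exact hzero g hg
        | zero => simp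
        | add a b ha hb iha ihb => rw [inner_add_right, iha, ihb, add_zero]
        | smul c a ha iha => rw [inner_smul_right, iha, mul_zero]
      have hx0 : (x : H) = 0 := by
        have := hall (x : H)
        rwa [inner_self_eq_zero] at this
      have hx1 := x.2
      rw [hx0, norm_zero] at hx1
      norm_num at hx1
  -- the family of functionals
  set f : {x : H // ‖x‖ = 1} → (H →L[ℝ] ℝ) := fun x => (ε x)⁻¹ • innerSL ℝ (x : H) with hf
  have hptwise : ∀ y : H, ∃ C, ∀ x, ‖f x y‖ ≤ C := by
    intro y
    have hy : y ∈ Submodule.span ℝ D := hspan ▸ Submodule.mem_top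
    have key : ∃ C, 0 ≤ C ∧ ∀ x : {x : H // ‖x‖ = 1}, |(inner ℝ (x : H) y : ℝ)| ≤ C * ε x := by
      induction hy using Submodule.span_induction with
      | mem g hg =>
          exact ⟨1, zero_le_one, fun x => by simpa using hle x ⟨g, hg⟩⟩
      | zero => exact ⟨0, le_refl _, fun x => by simp⟩
      | add a b ha hb iha ihb =>
          obtain ⟨C1, hC1, h1⟩ := iha
          obtain ⟨C2, hC2, h2⟩ := ihb
          refine ⟨C1 + C2, by linarith, fun x => ?_⟩
          calc |(inner ℝ (x : H) (a + b) : ℝ)| = |(inner ℝ (x : H) a : ℝ) + (inner ℝ (x : H) b : ℝ)| := by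
                rw [inner_add_right]
          _ ≤ |(inner ℝ (x : H) a : ℝ)| + |(inner ℝ (x : H) b : ℝ)| := abs_add_le _ _
          _ ≤ C1 * ε x + C2 * ε x := add_le_add (h1 x) (h2 x)
          _ = (C1 + C2) * ε x := by ring
      | smul c a ha iha =>
          obtain ⟨C, hC, h1⟩ := iha
          refine ⟨|c| * C, by positivity, fun x => ?_⟩
          calc |(inner ℝ (x : H) (c • a) : ℝ)| = |c| * |(inner ℝ (x : H) a : ℝ)| := by
                rw [inner_smul_right]; exact abs_mul _ _
          _ ≤ |c| * (C * ε x) := by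
                exact mul_le_mul_of_nonneg_left (h1 x) (abs_nonneg c)
          _ = (|c| * C) * ε x := by ring
    obtain ⟨C, hC0, hC⟩ := key
    refine ⟨C, fun x => ?_⟩
    have hεx := hεpos x
    have : ‖f x y‖ = (ε x)⁻¹ * |(inner ℝ (x : H) y : ℝ)| := by
      simp only [hf, ContinuousLinearMap.smul_apply, innerSL_apply_apply, smul_eq_mul,
        Real.norm_eq_abs, abs_mul, abs_of_nonneg (le_of_lt (inv_pos.mpr hεx))]
    rw [this]
    rw [inv_mul_le_iff₀ hεx]
    calc |(inner ℝ (x : H) y : ℝ)| ≤ C * ε x := hC x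
    _ = ε x * C := mul_comm _ _
  obtain ⟨C', hC'⟩ := banach_steinhaus hptwise
  -- ‖f x‖ = (ε x)⁻¹
  have hnorm : ∀ x : {x : H // ‖x‖ = 1}, ‖f x‖ = (ε x)⁻¹ := by
    intro x
    show ‖(ε x)⁻¹ • innerSL ℝ (x : H)‖ = (ε x)⁻¹
    rw [norm_smul (ε x)⁻¹ (innerSL ℝ (x : H)), innerSL_apply_norm, x.2, mul_one, Real.norm_eq_abs]
    exact abs_of_nonneg (le_of_lt (inv_pos.mpr (hεpos x)))
  have hC'pos : 0 < C' := by
    obtain ⟨x⟩ := ‹Nonempty {x : H // ‖x‖ = 1}›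
    have := hC' x
    rw [hnorm x] at this
    exact lt_of_lt_of_le (inv_pos.mpr (hεpos x)) this
  have hlow : ∀ x : {x : H // ‖x‖ = 1}, C'⁻¹ ≤ ε x := by
    intro x
    have := hC' x
    rw [hnorm x] at this
    have := inv_anti₀ (inv_pos.mpr (hεpos x)) this
    rwa [inv_inv] at this
  calc (0 : ℝ) < C'⁻¹ := inv_pos.mpr hC'pos
  _ ≤ ⨅ x : {x : H // ‖x‖ = 1}, ε x := le_ciInf hlow
end

section
/- Let D be a subset of the unit sphere of a real Hilbert space H such that the linear span of D equals H and the set Λ(D) = { λ g : λ ∈ ℝ, g ∈ D } is weakly closed. Then there exists K ∈ ℕ such that every element of H is a linear combination of at most K elements of D. -/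
open Set Topology Metric InnerProductSpace
open scoped Pointwise

/-!
Write `Λ = scalarMultiples ℝ D`. The sets `n • (Λ ∩ closedBall 0 R)` of sums of `n` points of `Λ` of
norm at most `R` are weakly compact, because closed balls of a Hilbert space are weakly compact and
`Λ` is weakly closed; so they are norm closed, and since `D` spans `H` they cover `H`. By Baire one
of them has an interior point `x₀`. As `Λ` is stable under all scalars, so is `(n + n) • Λ`, which
contains the neighbourhood `interior (n • Λ) + (-x₀)` of `0`; an absorbent set stable under
scalars is the whole space.
-/

section ScalarMultiples

variable {𝕜 E : Type*}

variable (𝕜) in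
def scalarMultiples [SMul 𝕜 E] (D : Set E) : Set E := {x | ∃ (l : 𝕜) (g : E), g ∈ D ∧ x = l • g}

variable [Semiring 𝕜] [AddCommMonoid E] [Module 𝕜 E] {D : Set E} {n : ℕ} {x : E}

theorem mem_nsmul_scalarMultiples_iff : x ∈ n • scalarMultiples 𝕜 D ↔
    ∃ (l : Fin n → 𝕜) (g : Fin n → E), (∀ i, g i ∈ D) ∧ x = ∑ i, l i • g i := by
  simp only [Set.mem_nsmul_iff_sum, scalarMultiples, mem_ofPred_eq]
  constructor
  · rintro ⟨t, ht, rfl⟩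
    choose l g hg ht using ht
    exact ⟨l, g, hg, Finset.sum_congr rfl fun i _ => ht i⟩
  · rintro ⟨l, g, hg, rfl⟩
    exact ⟨fun i => l i • g i, fun i => ⟨l i, g i, hg i, rfl⟩, rfl⟩

theorem smul_mem_nsmul_scalarMultiples (c : 𝕜) (hx : x ∈ n • scalarMultiples 𝕜 D) :
    c • x ∈ n • scalarMultiples 𝕜 D := by
  obtain ⟨l, g, hg, rfl⟩ := mem_nsmul_scalarMultiples_iff.1 hx
  refine mem_nsmul_scalarMultiples_iff.2 ⟨fun i => c * l i, g, hg, ?_⟩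
  simp only [Finset.smul_sum, smul_smul]

theorem exists_mem_nsmul_scalarMultiples_of_mem_span (hx : x ∈ Submodule.span 𝕜 D) :
    ∃ n : ℕ, x ∈ n • scalarMultiples 𝕜 D := by
  obtain ⟨n, l, g, rfl⟩ := Submodule.mem_span_set'.1 hx
  exact ⟨n, mem_nsmul_scalarMultiples_iff.2 ⟨l, fun i => g i, fun i => (g i).2, rfl⟩⟩

end ScalarMultiples

theorem exists_mem_nsmul_inter_closedBall {E : Type*} [SeminormedAddCommGroup E] {s : Set E}
    {n : ℕ} {x : E} (hx : x ∈ n • s) : ∃ R : ℕ, x ∈ n • (s ∩ closedBall 0 R) := by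
  obtain ⟨t, ht, rfl⟩ := Set.mem_nsmul_iff_sum.1 hx
  refine ⟨⌈∑ i, ‖t i‖⌉₊, Set.mem_nsmul_iff_sum.2 ⟨t, fun i => ⟨ht i, ?_⟩, rfl⟩⟩
  rw [mem_closedBall_zero_iff]
  exact (Finset.single_le_sum (fun j _ => norm_nonneg (t j)) (Finset.mem_univ i)).trans
    (Nat.le_ceil _)

theorem Absorbent.eq_univ_of_smul_mem {𝕜 E : Type*} [NontriviallyNormedField 𝕜] [AddCommGroup E]
    [Module 𝕜 E] {s : Set E} (hs : Absorbent 𝕜 s) (hsmul : ∀ (c : 𝕜) x, x ∈ s → c • x ∈ s) :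
    s = univ := by
  refine eq_univ_of_forall fun x => ?_
  obtain ⟨c, hc, hc₀⟩ :=
    ((absorbent_iff_eventually_nhdsNE_zero.1 hs x).and eventually_mem_nhdsWithin).exists
  simpa [inv_smul_smul₀ hc₀] using hsmul c⁻¹ _ hc

theorem IsCompact.nsmul_set {M : Type*} [AddMonoid M] [TopologicalSpace M] [ContinuousAdd M]
    {K : Set M} (hK : IsCompact K) : ∀ n : ℕ, IsCompact (n • K)
  | 0 => by simp
  | n + 1 => by simpa only [succ_nsmul] using (hK.nsmul_set n).add hK

section WeakTopology

variable {𝕜 E : Type*} [RCLike 𝕜]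

theorem isClosed_of_isCompact_toWeakSpace_image [NormedAddCommGroup E] [NormedSpace 𝕜 E]
    {s : Set E} (hs : IsCompact (toWeakSpace 𝕜 E '' s)) : IsClosed s := by
  rw [← (toWeakSpace 𝕜 E).injective.preimage_image s]
  exact hs.isClosed.preimage (toWeakSpaceCLM 𝕜 E).continuous

variable [NormedAddCommGroup E] [InnerProductSpace 𝕜 E] [CompleteSpace E]

theorem continuous_toWeakSpace_toDual_symm :
    Continuous fun f : WeakDual 𝕜 E =>
      toWeakSpace 𝕜 E ((toDual 𝕜 E).symm (WeakDual.toStrongDual f)) := by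
  refine WeakBilin.continuous_of_continuous_eval _ fun y => ?_
  have h (g : StrongDual 𝕜 E) :
      y ((toDual 𝕜 E).symm g) = starRingEnd 𝕜 (g ((toDual 𝕜 E).symm y)) := by
    rw [← toDual_symm_apply, ← inner_conj_symm, toDual_symm_apply]
  change Continuous fun f : WeakDual 𝕜 E => y ((toDual 𝕜 E).symm (WeakDual.toStrongDual f))
  simp only [h]
  exact continuous_star.comp (WeakDual.eval_continuous _)

theorem isCompact_toWeakSpace_closedBall (R : ℝ) :
    IsCompact (toWeakSpace 𝕜 E '' closedBall 0 R) := by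
  have h := (WeakDual.isCompact_closedBall (𝕜 := 𝕜) (E := E) 0 R).image
    continuous_toWeakSpace_toDual_symm
  rwa [← image_image (toWeakSpace 𝕜 E), ← image_image (toDual 𝕜 E).symm,
    image_preimage_eq _ WeakDual.toStrongDual.surjective, LinearIsometryEquiv.image_closedBall,
    map_zero] at h

theorem isClosed_nsmul_inter_closedBall {s : Set E} (hs : IsClosed (toWeakSpace 𝕜 E '' s))
    (n : ℕ) (R : ℝ) : IsClosed (n • (s ∩ closedBall 0 R)) := by
  refine isClosed_of_isCompact_toWeakSpace_image (𝕜 := 𝕜) ?_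
  rw [image_nsmul, image_inter (toWeakSpace 𝕜 E).injective]
  exact ((isCompact_toWeakSpace_closedBall R).inter_left hs).nsmul_set n

end WeakTopology

theorem exists_uniform_bound_of_weakly_closed_dictionary_general
    {H : Type*} [NormedAddCommGroup H] [InnerProductSpace ℝ H] [CompleteSpace H]
    (D : Set H)
    (hspan : Submodule.span ℝ D = ⊤)
    (hwclosed : IsClosed
      ((toWeakSpace ℝ H) '' {x : H | ∃ (l : ℝ) (g : H), g ∈ D ∧ x = l • g})) :
    ∃ K : ℕ, ∀ x : H, ∃ (l : Fin K → ℝ) (g : Fin K → H),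
      (∀ i, g i ∈ D) ∧ x = ∑ i, l i • g i := by
  have hcover : ⋃ p : ℕ × ℕ, p.1 • (scalarMultiples ℝ D ∩ closedBall 0 p.2) = univ := by
    refine eq_univ_of_forall fun x => mem_iUnion.2 ?_
    obtain ⟨n, hn⟩ :=
      exists_mem_nsmul_scalarMultiples_of_mem_span (hspan ▸ Submodule.mem_top (x := x))
    obtain ⟨R, hR⟩ := exists_mem_nsmul_inter_closedBall hn
    exact ⟨(n, R), hR⟩
  obtain ⟨⟨n, R⟩, x₀, hx₀⟩ := nonempty_interior_of_iUnion_of_closed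
    (fun p : ℕ × ℕ => isClosed_nsmul_inter_closedBall hwclosed p.1 p.2) hcover
  replace hx₀ : x₀ ∈ interior (n • scalarMultiples ℝ D) :=
    interior_mono (nsmul_subset_nsmul_left inter_subset_left) hx₀
  have hneg : -x₀ ∈ n • scalarMultiples ℝ D := by
    simpa using smul_mem_nsmul_scalarMultiples (-1 : ℝ) (interior_subset hx₀)
  have hnhds : (n + n) • scalarMultiples ℝ D ∈ 𝓝 0 := by
    rw [add_nsmul, ← mem_interior_iff_mem_nhds, ← add_neg_cancel x₀]
    exact subset_interior_add_left (add_mem_add hx₀ hneg)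
  have huniv := (absorbent_nhds_zero (𝕜 := ℝ) hnhds).eq_univ_of_smul_mem
    fun c _ => smul_mem_nsmul_scalarMultiples c
  exact ⟨n + n, fun x => mem_nsmul_scalarMultiples_iff.1 (huniv ▸ mem_univ x)⟩

theorem exists_uniform_bound_of_weakly_closed_dictionary
    {H : Type*} [NormedAddCommGroup H] [InnerProductSpace ℝ H] [CompleteSpace H]
    (D : Set H) (hD : ∀ g ∈ D, ‖g‖ = 1)
    (hspan : Submodule.span ℝ D = ⊤)
    (hwclosed : IsClosed
      ((toWeakSpace ℝ H) '' {x : H | ∃ (l : ℝ) (g : H), g ∈ D ∧ x = l • g})) :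
    ∃ K : ℕ, ∀ x : H, ∃ (l : Fin K → ℝ) (g : Fin K → H),
      (∀ i, g i ∈ D) ∧ x = ∑ i, l i • g i :=
  exists_uniform_bound_of_weakly_closed_dictionary_general D hspan hwclosed
end

section
/- Let L₁, L₂ be closed subspaces of a real Hilbert space H, Y = L₁^⊥ + L₂^⊥, and for y ∈ Y define s(y) = inf{ ‖y₁‖ + ‖y₂‖ : y = y₁ + y₂, yⱼ ∈ Lⱼ^⊥ }. If x ∈ L₁ ∩ Y and x' = P₂ x (the orthogonal projection of x onto L₂), then s(x') ≤ s(x). -/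
/-!
Given a decomposition `x = y₁ + y₂` with `yⱼ ∈ Lⱼᗮ`, the point `x' = P₂ x` decomposes as
`x' = y₁ + (y₂ - q)` with `q = x - x' ∈ L₂ᗮ`, so it suffices that `‖y₂ - q‖ ≤ ‖y₂‖`.
Since `x ∈ L₁` is orthogonal to `y₁` and `x' ∈ L₂` is orthogonal to `y₂`, we get
`⟪y₂, q⟫ = ⟪y₂, x⟫ = ‖x‖² ≥ ‖q‖²`, and expanding `‖y₂ - q‖²` gives the claim.
-/

open scoped RealInnerProductSpace

/-- The decomposition norm `s(y) = inf { ‖y₁‖ + ‖y₂‖ : y = y₁ + y₂, yⱼ ∈ Lⱼ^⊥ }`. -/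
noncomputable def decompNorm2 {H : Type*} [NormedAddCommGroup H] [InnerProductSpace ℝ H]
    (L₁ L₂ : Submodule ℝ H) (y : H) : ℝ :=
  sInf {r : ℝ | ∃ y₁ y₂ : H, y₁ ∈ L₁ᗮ ∧ y₂ ∈ L₂ᗮ ∧ y = y₁ + y₂ ∧ r = ‖y₁‖ + ‖y₂‖}

section

variable {H : Type*} [NormedAddCommGroup H] [InnerProductSpace ℝ H]

theorem norm_sub_le_of_norm_sq_le_two_mul_inner {a b : H} (h : ‖b‖ ^ 2 ≤ 2 * ⟪a, b⟫) :
    ‖a - b‖ ≤ ‖a‖ := by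
  have hsq : ‖a - b‖ ^ 2 ≤ ‖a‖ ^ 2 := by
    rw [norm_sub_sq_real]
    linarith
  exact (sq_le_sq₀ (norm_nonneg _) (norm_nonneg _)).mp hsq

theorem norm_starProjection_sub_le {K : Submodule ℝ H} [K.HasOrthogonalProjection]
    {x y₁ y₂ : H} (hxy₁ : ⟪x, y₁⟫ = 0) (hy₂ : y₂ ∈ Kᗮ) (hx : x = y₁ + y₂) :
    ‖K.starProjection x - y₁‖ ≤ ‖y₂‖ := by
  set q := x - K.starProjection x
  have hq_le : ‖q‖ ≤ ‖x‖ := by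
    simpa only [Submodule.starProjection_orthogonal_val] using
      Kᗮ.norm_starProjection_apply_le x
  have hy₂x : y₂ = x - y₁ := by rw [hx, add_sub_cancel_left]
  have hinner : ⟪y₂, q⟫ = ‖x‖ ^ 2 := by
    have hy₂P : ⟪y₂, K.starProjection x⟫ = 0 :=
      Submodule.inner_left_of_mem_orthogonal (K.starProjection_apply_mem x) hy₂
    rw [inner_sub_right, hy₂P, sub_zero, hy₂x, inner_sub_left, real_inner_self_eq_norm_sq,
      real_inner_comm, hxy₁, sub_zero]
  have hrewrite : K.starProjection x - y₁ = y₂ - q := by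
    rw [hy₂x, sub_sub_sub_cancel_left]
  rw [hrewrite]
  refine norm_sub_le_of_norm_sq_le_two_mul_inner ?_
  nlinarith [norm_nonneg q]

variable (L₁ L₂ : Submodule ℝ H)

theorem decompNorm2_le {y y₁ y₂ : H} (hy₁ : y₁ ∈ L₁ᗮ) (hy₂ : y₂ ∈ L₂ᗮ) (hy : y = y₁ + y₂) :
    decompNorm2 L₁ L₂ y ≤ ‖y₁‖ + ‖y₂‖ := by
  refine csInf_le ⟨0, ?_⟩ ⟨y₁, y₂, hy₁, hy₂, hy, rfl⟩
  rintro r ⟨z₁, z₂, -, -, -, rfl⟩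
  positivity

theorem le_decompNorm2 {y : H} {c : ℝ} (hY : ∃ y₁ y₂ : H, y₁ ∈ L₁ᗮ ∧ y₂ ∈ L₂ᗮ ∧ y = y₁ + y₂)
    (h : ∀ y₁ y₂ : H, y₁ ∈ L₁ᗮ → y₂ ∈ L₂ᗮ → y = y₁ + y₂ → c ≤ ‖y₁‖ + ‖y₂‖) :
    c ≤ decompNorm2 L₁ L₂ y := by
  obtain ⟨y₁, y₂, hy₁, hy₂, hy⟩ := hY
  refine le_csInf ⟨_, y₁, y₂, hy₁, hy₂, hy, rfl⟩ ?_
  rintro r ⟨z₁, z₂, hz₁, hz₂, hz, rfl⟩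
  exact h z₁ z₂ hz₁ hz₂ hz

end

theorem decompNorm_nonincreasing_on_projection_general
    {H : Type*} [NormedAddCommGroup H] [InnerProductSpace ℝ H]
    (L₁ L₂ : Submodule ℝ H)
    [CompleteSpace L₂]
    (x : H) (hx₁ : x ∈ L₁)
    (hxY : ∃ y₁ y₂ : H, y₁ ∈ L₁ᗮ ∧ y₂ ∈ L₂ᗮ ∧ x = y₁ + y₂) :
    decompNorm2 L₁ L₂ (L₂.orthogonalProjectionOnto x : H) ≤ decompNorm2 L₁ L₂ x := by
  rw [Submodule.coe_orthogonalProjectionOnto_apply]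
  refine le_decompNorm2 L₁ L₂ hxY fun y₁ y₂ hy₁ hy₂ hx => ?_
  have hxy₁ : ⟪x, y₁⟫ = 0 := hy₁ x hx₁
  have hsub : L₂.starProjection x - y₁ ∈ L₂ᗮ := by
    convert L₂ᗮ.sub_mem hy₂ (L₂.sub_starProjection_mem_orthogonal x) using 1
    rw [hx]; abel
  calc decompNorm2 L₁ L₂ (L₂.starProjection x)
      ≤ ‖y₁‖ + ‖L₂.starProjection x - y₁‖ := decompNorm2_le L₁ L₂ hy₁ hsub (by abel)
    _ ≤ ‖y₁‖ + ‖y₂‖ := by gcongr; exact norm_starProjection_sub_le hxy₁ hy₂ hx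

theorem decompNorm_nonincreasing_on_projection
    {H : Type*} [NormedAddCommGroup H] [InnerProductSpace ℝ H] [CompleteSpace H]
    (L₁ L₂ : Submodule ℝ H)
    (h₁ : IsClosed ((L₁ : Set H))) (h₂ : IsClosed ((L₂ : Set H)))
    [CompleteSpace L₂]
    (x : H) (hx₁ : x ∈ L₁)
    (hxY : ∃ y₁ y₂ : H, y₁ ∈ L₁ᗮ ∧ y₂ ∈ L₂ᗮ ∧ x = y₁ + y₂) :
    decompNorm2 L₁ L₂ (L₂.orthogonalProjectionOnto x : H) ≤ decompNorm2 L₁ L₂ x :=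
  decompNorm_nonincreasing_on_projection_general L₁ L₂ x hx₁ hxY
end

section
/- Let L₁,…,L_K be closed subspaces of a real Hilbert space H and T = P_K ∘ ⋯ ∘ P₁. Let Y = L₁^⊥ + ⋯ + L_K^⊥ and s the decomposition norm on Y. For y ∈ Y, with vⱼ = Pⱼ^⊥ P_{j-1} ⋯ P₁ y, one has s(T y) ≤ s(y) + Σ_{j=1}^K ‖vⱼ‖ ≤ s(y) + √K · (Σⱼ ‖vⱼ‖²)^{1/2}. -/
/-- The decomposition norm `s(y) = inf { Σⱼ ‖yⱼ‖ : y = Σⱼ yⱼ, yⱼ ∈ Lⱼ^⊥ }`. -/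
noncomputable def decompNorm {H : Type*} [NormedAddCommGroup H] [InnerProductSpace ℝ H]
    {K : ℕ} (L : Fin K → Submodule ℝ H) (y : H) : ℝ :=
  sInf {r : ℝ | ∃ f : Fin K → H, (∀ j, f j ∈ (L j)ᗮ) ∧ y = ∑ j, f j ∧ r = ∑ j, ‖f j‖}

/-!
Each `vⱼ = zⱼ - Pⱼ zⱼ` lies in `Lⱼᗮ`, and the `vⱼ` telescope to `y - T y`. Subtracting `vⱼ` from the
`j`-th summand of any decomposition of `y` therefore decomposes `T y` at an extra cost of at most
`Σⱼ ‖vⱼ‖`. The second inequality is Cauchy–Schwarz.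
-/

open Finset

theorem sum_le_sqrt_card_mul_sqrt_sum_sq {ι : Type*} (s : Finset ι) (f : ι → ℝ) :
    ∑ i ∈ s, f i ≤ √(#s : ℝ) * √(∑ i ∈ s, f i ^ 2) :=
  calc ∑ i ∈ s, f i ≤ √((∑ i ∈ s, f i) ^ 2) :=
      (le_abs_self _).trans_eq (Real.sqrt_sq_eq_abs _).symm
    _ ≤ √(#s * ∑ i ∈ s, f i ^ 2) := Real.sqrt_le_sqrt (sq_sum_le_card_mul_sum_sq ..)
    _ = √(#s : ℝ) * √(∑ i ∈ s, f i ^ 2) := Real.sqrt_mul (Nat.cast_nonneg _) _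

theorem Fin.sum_sub_succ {M : Type*} [AddCommGroup M] (z : ℕ → M) (n : ℕ) :
    ∑ i : Fin n, (z i - z (i + 1)) = z 0 - z n := by
  rw [Fin.sum_univ_eq_sum_range (fun i ↦ z i - z (i + 1)), sum_range_sub']

section decompNorm

variable {H : Type*} [NormedAddCommGroup H] [InnerProductSpace ℝ H] {K : ℕ}
  (L : Fin K → Submodule ℝ H)

theorem decompNorm_le_sum_norm {f : Fin K → H} (hf : ∀ j, f j ∈ (L j)ᗮ) :
    decompNorm L (∑ j, f j) ≤ ∑ j, ‖f j‖ :=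
  csInf_le ⟨0, by rintro r ⟨g, -, -, rfl⟩; positivity⟩ ⟨f, hf, rfl, rfl⟩

theorem decompNorm_sub_sum_le {y : H} (hy : ∃ f : Fin K → H, (∀ j, f j ∈ (L j)ᗮ) ∧ y = ∑ j, f j)
    {g : Fin K → H} (hg : ∀ j, g j ∈ (L j)ᗮ) :
    decompNorm L (y - ∑ j, g j) ≤ decompNorm L y + ∑ j, ‖g j‖ := by
  obtain ⟨f, hf, rfl⟩ := hy
  rw [← sub_le_iff_le_add]
  refine le_csInf ⟨_, f, hf, rfl, rfl⟩ ?_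
  rintro r ⟨f', hf', hff', rfl⟩
  calc decompNorm L (∑ j, f j - ∑ j, g j) - ∑ j, ‖g j‖
      = decompNorm L (∑ j, (f' j - g j)) - ∑ j, ‖g j‖ := by rw [hff', sum_sub_distrib]
    _ ≤ ∑ j, ‖f' j - g j‖ - ∑ j, ‖g j‖ := by
      gcongr
      exact decompNorm_le_sum_norm L fun j ↦ sub_mem (hf' j) (hg j)
    _ ≤ ∑ j, ‖f' j‖ := by
      rw [sub_le_iff_le_add, ← sum_add_distrib]
      exact sum_le_sum fun j _ ↦ norm_sub_le _ _

end decompNorm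

theorem decompNorm_growth_of_alternating_step_general
    {H : Type*} [NormedAddCommGroup H] [InnerProductSpace ℝ H]
    {K : ℕ} (L : Fin K → Submodule ℝ H)
    [∀ k, CompleteSpace (L k)]
    (y : H) (hy : ∃ f : Fin K → H, (∀ j, f j ∈ (L j)ᗮ) ∧ y = ∑ j, f j)
    (z : ℕ → H) (hz0 : z 0 = y)
    (hz : ∀ j : Fin K, z ((j : ℕ) + 1) = (Submodule.orthogonalProjectionOnto (L j) (z j) : H))
    (v : Fin K → H) (hv : ∀ j : Fin K, v j = z j - z ((j : ℕ) + 1)) :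
    decompNorm L (z K) ≤ decompNorm L y + ∑ j, ‖v j‖ ∧
      decompNorm L y + ∑ j, ‖v j‖ ≤
        decompNorm L y + Real.sqrt K * Real.sqrt (∑ j, ‖v j‖ ^ 2) := by
  have hv_mem (j : Fin K) : v j ∈ (L j)ᗮ := by
    rw [hv j, hz j]
    exact (L j).sub_starProjection_mem_orthogonal _
  have hzK : z K = y - ∑ j, v j := by
    simp only [hv, Fin.sum_sub_succ, hz0, sub_sub_cancel]
  refine ⟨hzK ▸ decompNorm_sub_sum_le L hy hv_mem, ?_⟩
  simpa using sum_le_sqrt_card_mul_sqrt_sum_sq univ fun j ↦ ‖v j‖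

theorem decompNorm_growth_of_alternating_step
    {H : Type*} [NormedAddCommGroup H] [InnerProductSpace ℝ H] [CompleteSpace H]
    {K : ℕ} (L : Fin K → Submodule ℝ H)
    (hclosed : ∀ k, IsClosed ((L k : Set H))) [∀ k, CompleteSpace (L k)]
    (y : H) (hy : ∃ f : Fin K → H, (∀ j, f j ∈ (L j)ᗮ) ∧ y = ∑ j, f j)
    (z : ℕ → H) (hz0 : z 0 = y)
    (hz : ∀ j : Fin K, z ((j : ℕ) + 1) = (Submodule.orthogonalProjectionOnto (L j) (z j) : H))
    (v : Fin K → H) (hv : ∀ j : Fin K, v j = z j - z ((j : ℕ) + 1)) :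
    decompNorm L (z K) ≤ decompNorm L y + ∑ j, ‖v j‖ ∧
      decompNorm L y + ∑ j, ‖v j‖ ≤
        decompNorm L y + Real.sqrt K * Real.sqrt (∑ j, ‖v j‖ ^ 2) :=
  decompNorm_growth_of_alternating_step_general L y hy z hz0 hz v hv
end

section
/- Let L₁,…,L_K be closed subspaces of a real Hilbert space H, T = P_K ∘ ⋯ ∘ P₁, and Y = L₁^⊥ + ⋯ + L_K^⊥. For every x₀ ∈ Y there exists a constant c(x₀) > 0 such that ‖Tⁿ x₀‖ ≤ c(x₀) · n^{-1/(4K√K + 2)} for all n ≥ 1. -/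
/-!
Let `T` be one sweep of the projections and `S = T*` the reverse sweep. By Pythagoras and
Cauchy–Schwarz, `N` consecutive projections move a vector by at most `√(N d)`, where `d` is the
loss of `‖·‖²` along the way. As a sweep passes through every `L j`, this gives
`⟪v, x₀⟫ ≤ F √(K (‖v‖² - ‖S v‖²))` for `x₀ = ∑ f j` with `f j ∈ (L j)ᗮ` and `F = ∑ ‖f j‖`.
For `x = T^(p+q) x₀` pick `p ≤ m < p + q` at which `S^m x` loses at most `‖x‖² / q`; then
`‖x‖² = ⟪S^m x, x₀⟫ - ⟪x, T^m x₀ - x⟫` yields `‖x‖ ≤ F √(K / q) + √(q K (‖T^p x₀‖² - ‖x‖²))`.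
Cutting `[0, k³]` into `k²` blocks of `k` sweeps, one block loses at most `F² / k²`, whence
`‖T^(k³) x₀‖ ≤ 2 F √(K / k)`, i.e. `‖T^n x₀‖ = O(n^(-1/6))`, a faster rate than claimed since
`4 K √K + 2 ≥ 6`.
-/

open Finset
open scoped InnerProductSpace

theorem norm_sub_sq_le_of_norm_sub_sq_le {E : Type*} [SeminormedAddCommGroup E] {z : ℕ → E}
    {c : ℝ} (hz : ∀ l, ‖z l - z (l + 1)‖ ^ 2 ≤ c * (‖z l‖ ^ 2 - ‖z (l + 1)‖ ^ 2)) (N : ℕ) :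
    ‖z 0 - z N‖ ^ 2 ≤ N * c * (‖z 0‖ ^ 2 - ‖z N‖ ^ 2) :=
  calc ‖z 0 - z N‖ ^ 2 ≤ (∑ l ∈ range N, ‖z l - z (l + 1)‖) ^ 2 := by
        rw [← sum_range_sub' z N]; gcongr; exact norm_sum_le _ _
    _ ≤ N * ∑ l ∈ range N, ‖z l - z (l + 1)‖ ^ 2 := by
        simpa using sq_sum_le_card_mul_sum_sq (s := range N) (f := fun l => ‖z l - z (l + 1)‖)
    _ ≤ N * ∑ l ∈ range N, c * (‖z l‖ ^ 2 - ‖z (l + 1)‖ ^ 2) := by gcongr with l; exact hz l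
    _ = N * c * (‖z 0‖ ^ 2 - ‖z N‖ ^ 2) := by
        rw [← mul_sum, sum_range_sub' (fun l => ‖z l‖ ^ 2)]; ring

theorem exists_lt_sub_succ_le_div (β : ℕ → ℝ) {N : ℕ} (hN : 0 < N) :
    ∃ r < N, β r - β (r + 1) ≤ (β 0 - β N) / N := by
  have hsum : ∑ r ∈ range N, (β r - β (r + 1)) ≤ ∑ _r ∈ range N, (β 0 - β N) / N := by
    rw [sum_range_sub', sum_const, card_range, nsmul_eq_mul, mul_div_cancel₀ _ (by positivity)]
  obtain ⟨r, hr, hle⟩ := exists_le_of_sum_le (nonempty_range_iff.mpr hN.ne') hsum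
  exact ⟨r, mem_range.mp hr, hle⟩

theorem exists_cube_le_lt_two_mul_cube {n : ℕ} (hn : 0 < n) :
    ∃ k, 0 < k ∧ k ^ 3 ≤ n ∧ n < (2 * k) ^ 3 := by
  classical
  have hex : ∃ k, n < (k + 1) ^ 3 :=
    ⟨n, (Nat.lt_succ_self n).trans_le (Nat.le_self_pow (by norm_num) _)⟩
  have hk : 0 < Nat.find hex := Nat.pos_of_ne_zero fun h => by
    have := Nat.find_spec hex
    rw [h] at this
    omega
  refine ⟨Nat.find hex, hk, ?_, ?_⟩
  · have := Nat.find_min hex (Nat.sub_lt hk one_pos)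
    rwa [Nat.sub_one_add_one hk.ne', not_lt] at this
  · calc n < (Nat.find hex + 1) ^ 3 := Nat.find_spec hex
      _ ≤ (2 * Nat.find hex) ^ 3 := by gcongr; omega

section

variable {ι H : Type*} [NormedAddCommGroup H] [InnerProductSpace ℝ H]
  (L : ι → Submodule ℝ H) [∀ i, (L i).HasOrthogonalProjection]

theorem Submodule.norm_sub_starProjection_sq (U : Submodule ℝ H) [U.HasOrthogonalProjection]
    (x : H) : ‖x - U.starProjection x‖ ^ 2 = ‖x‖ ^ 2 - ‖U.starProjection x‖ ^ 2 := by
  rw [U.norm_sq_eq_add_norm_sq_starProjection x, U.starProjection_orthogonal_val]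
  ring

noncomputable def sweep (l : List ι) (x : H) : H :=
  l.foldl (fun w i => (L i).starProjection w) x

@[simp]
theorem sweep_nil (x : H) : sweep L [] x = x := rfl

theorem sweep_cons (i : ι) (l : List ι) (x : H) :
    sweep L (i :: l) x = sweep L l ((L i).starProjection x) := rfl

theorem sweep_append (l l' : List ι) (x : H) :
    sweep L (l ++ l') x = sweep L l' (sweep L l x) :=
  List.foldl_append ..

theorem norm_sweep_le (l : List ι) (x : H) : ‖sweep L l x‖ ≤ ‖x‖ := by
  induction l generalizing x with
  | nil => rfl
  | cons i l ih => exact (ih _).trans ((L i).norm_starProjection_apply_le x)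

theorem norm_sub_sweep_sq_le (l : List ι) (x : H) :
    ‖x - sweep L l x‖ ^ 2 ≤ l.length * (‖x‖ ^ 2 - ‖sweep L l x‖ ^ 2) := by
  have hstep (k : ℕ) : ‖sweep L (l.take k) x - sweep L (l.take (k + 1)) x‖ ^ 2 ≤
      1 * (‖sweep L (l.take k) x‖ ^ 2 - ‖sweep L (l.take (k + 1)) x‖ ^ 2) := by
    rw [List.take_add_one, sweep_append, one_mul]
    cases l[k]? with
    | none => simp
    | some i => exact ((L i).norm_sub_starProjection_sq _).le
  simpa using norm_sub_sq_le_of_norm_sub_sq_le hstep l.length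

theorem inner_sweep_left (l : List ι) (x y : H) :
    ⟪sweep L l x, y⟫_ℝ = ⟪x, sweep L l.reverse y⟫_ℝ := by
  induction l generalizing x with
  | nil => rfl
  | cons i l ih =>
    rw [sweep_cons, ih, List.reverse_cons, sweep_append, (L i).inner_starProjection_left_eq_right]
    rfl

theorem abs_inner_le_of_mem_orthogonal {l : List ι} {i : ι} (hi : i ∈ l) {f : H}
    (hf : f ∈ (L i)ᗮ) (x : H) :
    |⟪x, f⟫_ℝ| ≤ ‖f‖ * √(l.length * (‖x‖ ^ 2 - ‖sweep L l x‖ ^ 2)) := by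
  obtain ⟨s, t, rfl⟩ := List.append_of_mem hi
  set w := sweep L (s ++ [i]) x
  have hw : ⟪w, f⟫_ℝ = 0 :=
    Submodule.inner_right_of_mem_orthogonal (by
      simp only [w, sweep_append]; exact (L i).starProjection_apply_mem _) hf
  have hdist : ‖x - w‖ ≤ √((s ++ i :: t).length * (‖x‖ ^ 2 - ‖sweep L (s ++ i :: t) x‖ ^ 2)) := by
    have hlen : (s ++ [i]).length ≤ (s ++ i :: t).length := by simp
    have hnorm : ‖sweep L (s ++ i :: t) x‖ ≤ ‖w‖ := by
      rw [show s ++ i :: t = s ++ [i] ++ t by simp, sweep_append]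
      exact norm_sweep_le L t w
    refine Real.le_sqrt_of_sq_le ((norm_sub_sweep_sq_le L _ x).trans ?_)
    have hwx : ‖w‖ ≤ ‖x‖ := norm_sweep_le L _ x
    gcongr
    exact sub_nonneg.mpr (by gcongr)
  calc |⟪x, f⟫_ℝ| = |⟪x - w, f⟫_ℝ| := by rw [inner_sub_left, hw, sub_zero]
    _ ≤ ‖x - w‖ * ‖f‖ := abs_real_inner_le_norm _ _
    _ ≤ _ := by rw [mul_comm]; gcongr

theorem inner_sum_le_of_mem_orthogonal [Fintype ι] {l : List ι} (hl : ∀ i, i ∈ l) {f : ι → H}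
    (hf : ∀ i, f i ∈ (L i)ᗮ) (x : H) :
    ⟪x, ∑ i, f i⟫_ℝ ≤ (∑ i, ‖f i‖) * √(l.length * (‖x‖ ^ 2 - ‖sweep L l x‖ ^ 2)) := by
  rw [inner_sum, sum_mul]
  exact sum_le_sum fun i _ =>
    (le_abs_self _).trans (abs_inner_le_of_mem_orthogonal L (hl i) (hf i) x)

theorem inner_iterate_sweep_reverse_left (l : List ι) (m : ℕ) (x y : H) :
    ⟪(sweep L l.reverse)^[m] x, y⟫_ℝ = ⟪x, (sweep L l)^[m] y⟫_ℝ := by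
  induction m generalizing x with
  | zero => rfl
  | succ m ih =>
    rw [Function.iterate_succ_apply, ih, inner_sweep_left, List.reverse_reverse,
      ← Function.iterate_succ_apply' (sweep L l)]

theorem antitone_norm_iterate_sweep (l : List ι) (x : H) :
    Antitone fun n => ‖(sweep L l)^[n] x‖ :=
  antitone_nat_of_succ_le fun n => by
    rw [Function.iterate_succ_apply']
    exact norm_sweep_le L l _

theorem norm_sub_iterate_sweep_sq_le (l : List ι) (x : H) (q : ℕ) :
    ‖x - (sweep L l)^[q] x‖ ^ 2 ≤ q * l.length * (‖x‖ ^ 2 - ‖(sweep L l)^[q] x‖ ^ 2) :=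
  norm_sub_sq_le_of_norm_sub_sq_le (z := fun r => (sweep L l)^[r] x) (fun r => by
    rw [Function.iterate_succ_apply']
    exact norm_sub_sweep_sq_le L l _) q

theorem norm_iterate_sweep_sub_le (l : List ι) (x : H) (p : ℕ) {r q : ℕ} (hrq : r ≤ q) :
    ‖(sweep L l)^[p + r] x - (sweep L l)^[p + q] x‖ ≤
      √(q * l.length * (‖(sweep L l)^[p] x‖ ^ 2 - ‖(sweep L l)^[p + q] x‖ ^ 2)) := by
  set T := sweep L l
  have hsplit : T^[p + q] x = T^[q - r] (T^[p + r] x) := by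
    rw [← Function.iterate_add_apply, show q - r + (p + r) = p + q by omega]
  have hpr : ‖T^[p + r] x‖ ≤ ‖T^[p] x‖ := antitone_norm_iterate_sweep L l x (by omega)
  have hprq : ‖T^[p + q] x‖ ≤ ‖T^[p + r] x‖ := antitone_norm_iterate_sweep L l x (by omega)
  rw [hsplit] at hprq ⊢
  refine Real.le_sqrt_of_sq_le ((norm_sub_iterate_sweep_sq_le L l _ (q - r)).trans ?_)
  gcongr
  · exact sub_nonneg.mpr (by gcongr)
  · exact_mod_cast Nat.sub_le q r

theorem norm_iterate_sweep_add_le [Fintype ι] {l : List ι} (hl : ∀ i, i ∈ l) {f : ι → H}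
    (hf : ∀ i, f i ∈ (L i)ᗮ) (p : ℕ) {q : ℕ} (hq : 0 < q) :
    ‖(sweep L l)^[p + q] (∑ i, f i)‖ ≤ (∑ i, ‖f i‖) * √(l.length / q) +
      √(q * l.length *
        (‖(sweep L l)^[p] (∑ i, f i)‖ ^ 2 - ‖(sweep L l)^[p + q] (∑ i, f i)‖ ^ 2)) := by
  set T := sweep L l
  set S := sweep L l.reverse
  set x₀ := ∑ i, f i
  set F := ∑ i, ‖f i‖
  set N : ℝ := (l.length : ℝ)
  set x := T^[p + q] x₀
  obtain ⟨r, hrq, hdrop⟩ := exists_lt_sub_succ_le_div (fun r => ‖S^[p + r] x‖ ^ 2) hq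
  have hsmall : ‖S^[p + r] x‖ ^ 2 - ‖S (S^[p + r] x)‖ ^ 2 ≤ ‖x‖ ^ 2 / q := by
    rw [← Function.iterate_succ_apply' S]
    refine hdrop.trans (div_le_div_of_nonneg_right ?_ (Nat.cast_nonneg q))
    have hSx : ‖S^[p + 0] x‖ ≤ ‖x‖ := antitone_norm_iterate_sweep L l.reverse x (Nat.zero_le _)
    calc _ ≤ ‖S^[p + 0] x‖ ^ 2 := sub_le_self _ (sq_nonneg _)
      _ ≤ ‖x‖ ^ 2 := by gcongr
  have hupper : ⟪x, T^[p + r] x₀⟫_ℝ ≤ F * ‖x‖ * √(N / q) := by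
    rw [← inner_iterate_sweep_reverse_left]
    calc ⟪S^[p + r] x, x₀⟫_ℝ ≤ F * √(N * (‖S^[p + r] x‖ ^ 2 - ‖S (S^[p + r] x)‖ ^ 2)) := by
          simpa [N] using inner_sum_le_of_mem_orthogonal L (l := l.reverse) (by simpa using hl)
            hf (S^[p + r] x)
      _ ≤ F * √(N * (‖x‖ ^ 2 / q)) := by gcongr
      _ = F * ‖x‖ * √(N / q) := by
          rw [show N * (‖x‖ ^ 2 / q) = ‖x‖ ^ 2 * (N / q) by ring, Real.sqrt_mul (sq_nonneg _),
            Real.sqrt_sq (norm_nonneg _)]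
          ring
  have hdist : ‖T^[p + r] x₀ - x‖ ≤ √(q * N * (‖T^[p] x₀‖ ^ 2 - ‖x‖ ^ 2)) :=
    norm_iterate_sweep_sub_le L l x₀ p hrq.le
  have hsq : ‖x‖ ^ 2 ≤ ‖x‖ * (F * √(N / q) + √(q * N * (‖T^[p] x₀‖ ^ 2 - ‖x‖ ^ 2))) := by
    calc ‖x‖ ^ 2 = ⟪x, T^[p + r] x₀⟫_ℝ - ⟪x, T^[p + r] x₀ - x⟫_ℝ := by
          rw [inner_sub_right, real_inner_self_eq_norm_sq]; ring
      _ ≤ F * ‖x‖ * √(N / q) + ‖x‖ * ‖T^[p + r] x₀ - x‖ := by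
          linarith [neg_abs_le ⟪x, T^[p + r] x₀ - x⟫_ℝ, abs_real_inner_le_norm x (T^[p + r] x₀ - x)]
      _ ≤ ‖x‖ * (F * √(N / q) + √(q * N * (‖T^[p] x₀‖ ^ 2 - ‖x‖ ^ 2))) := by
          linarith [mul_le_mul_of_nonneg_left hdist (norm_nonneg x)]
  have hR : 0 ≤ F * √(N / q) + √(q * N * (‖T^[p] x₀‖ ^ 2 - ‖x‖ ^ 2)) := by positivity
  nlinarith [norm_nonneg x]

theorem norm_iterate_sweep_cube_le [Fintype ι] {l : List ι} (hl : ∀ i, i ∈ l) {f : ι → H}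
    (hf : ∀ i, f i ∈ (L i)ᗮ) {k : ℕ} (hk : 0 < k) :
    ‖(sweep L l)^[k ^ 3] (∑ i, f i)‖ ≤ 2 * (∑ i, ‖f i‖) * √(l.length / k) := by
  set T := sweep L l
  set x₀ := ∑ i, f i
  set F := ∑ i, ‖f i‖
  set N : ℝ := (l.length : ℝ)
  obtain ⟨j, hj, hdrop⟩ := exists_lt_sub_succ_le_div (fun j => ‖T^[j * k] x₀‖ ^ 2) (pow_pos hk 2)
  have hsmall : ‖T^[j * k] x₀‖ ^ 2 - ‖T^[j * k + k] x₀‖ ^ 2 ≤ F ^ 2 / k ^ 2 := by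
    rw [← add_one_mul]
    refine hdrop.trans ?_
    push_cast
    gcongr
    have hx₀ : ‖T^[0 * k] x₀‖ ≤ F := by rw [zero_mul]; exact norm_sum_le _ _
    calc _ ≤ ‖T^[0 * k] x₀‖ ^ 2 := sub_le_self _ (sq_nonneg _)
      _ ≤ F ^ 2 := by gcongr
  have hjk : j * k + k ≤ k ^ 3 := by
    rw [← add_one_mul, pow_succ]; exact Nat.mul_le_mul_right k hj
  calc ‖T^[k ^ 3] x₀‖ ≤ ‖T^[j * k + k] x₀‖ := antitone_norm_iterate_sweep L l x₀ hjk
    _ ≤ F * √(N / k) + √(k * N * (‖T^[j * k] x₀‖ ^ 2 - ‖T^[j * k + k] x₀‖ ^ 2)) :=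
        norm_iterate_sweep_add_le L hl hf (j * k) hk
    _ ≤ F * √(N / k) + √(k * N * (F ^ 2 / k ^ 2)) := by gcongr
    _ = 2 * F * √(N / k) := by
        rw [show (k : ℝ) * N * (F ^ 2 / k ^ 2) = F ^ 2 * (N / k) by field_simp,
          Real.sqrt_mul (sq_nonneg _), Real.sqrt_sq (by positivity)]
        ring

theorem norm_iterate_sweep_le_rpow [Fintype ι] {l : List ι} (hl : ∀ i, i ∈ l) {f : ι → H}
    (hf : ∀ i, f i ∈ (L i)ᗮ) {n : ℕ} (hn : 0 < n) :
    ‖(sweep L l)^[n] (∑ i, f i)‖ ≤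
      2 * (∑ i, ‖f i‖) * √(2 * l.length) * (n : ℝ) ^ (-(1 / 6 : ℝ)) := by
  obtain ⟨k, hk, hkn, hnk⟩ := exists_cube_le_lt_two_mul_cube hn
  have hroot : (n : ℝ) ^ (1 / 6 : ℝ) ≤ √(2 * k) := by
    rw [Real.sqrt_eq_rpow, show (1 / 2 : ℝ) = 3 * (1 / 6) by norm_num,
      Real.rpow_mul (by positivity)]
    gcongr
    exact_mod_cast hnk.le
  calc ‖(sweep L l)^[n] (∑ i, f i)‖ ≤ ‖(sweep L l)^[k ^ 3] (∑ i, f i)‖ :=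
        antitone_norm_iterate_sweep L l _ hkn
    _ ≤ 2 * (∑ i, ‖f i‖) * √(l.length / k) := norm_iterate_sweep_cube_le L hl hf hk
    _ = 2 * (∑ i, ‖f i‖) * √(2 * l.length) / √(2 * k) := by
        rw [mul_div_assoc, ← Real.sqrt_div (by positivity), mul_div_mul_left _ _ two_ne_zero]
    _ ≤ 2 * (∑ i, ‖f i‖) * √(2 * l.length) / (n : ℝ) ^ (1 / 6 : ℝ) := by
        gcongr
    _ = 2 * (∑ i, ‖f i‖) * √(2 * l.length) * (n : ℝ) ^ (-(1 / 6 : ℝ)) := by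
        rw [Real.rpow_neg (Nat.cast_nonneg n), div_eq_mul_inv]

end

theorem alternating_projections_polynomial_rate_general
    {H : Type*} [NormedAddCommGroup H] [InnerProductSpace ℝ H]
    {K : ℕ} (hK : 0 < K) (L : Fin K → Submodule ℝ H)
    [∀ k, CompleteSpace (L k)]
    (T : H → H)
    (hT : ∀ y : H, T y = Fin.foldl K (fun w k => (Submodule.orthogonalProjection (L k) w : H)) y)
    (x₀ : H) (hx₀ : ∃ f : Fin K → H, (∀ j, f j ∈ (L j)ᗮ) ∧ x₀ = ∑ j, f j) :
    ∃ c : ℝ, 0 < c ∧ ∀ n : ℕ, 1 ≤ n →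
      ‖T^[n] x₀‖ ≤ c * (n : ℝ) ^ (-(1 / (4 * (K : ℝ) * Real.sqrt K + 2))) := by
  obtain ⟨f, hf, rfl⟩ := hx₀
  have hT_eq : T = sweep L (List.finRange K) :=
    funext fun y => (hT y).trans (Fin.foldl_eq_foldl_finRange _ _)
  set C := 2 * (∑ j, ‖f j‖) * √(2 * K)
  have hK1 : (1 : ℝ) ≤ K := by exact_mod_cast hK
  have hexp : -(1 / 6 : ℝ) ≤ -(1 / (4 * (K : ℝ) * √K + 2)) := by
    have : 1 ≤ (K : ℝ) * √K := one_le_mul_of_one_le_of_one_le hK1 (Real.one_le_sqrt.mpr hK1)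
    gcongr
    linarith
  refine ⟨C + 1, by positivity, fun n hn => ?_⟩
  calc ‖T^[n] (∑ j, f j)‖ ≤ C * (n : ℝ) ^ (-(1 / 6 : ℝ)) := by
        simpa [hT_eq, C] using norm_iterate_sweep_le_rpow L List.mem_finRange hf hn
    _ ≤ (C + 1) * (n : ℝ) ^ (-(1 / (4 * (K : ℝ) * √K + 2))) := by
        gcongr
        · linarith
        · exact_mod_cast hn

theorem alternating_projections_polynomial_rate
    {H : Type*} [NormedAddCommGroup H] [InnerProductSpace ℝ H] [CompleteSpace H]
    {K : ℕ} (hK : 0 < K) (L : Fin K → Submodule ℝ H)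
    (hclosed : ∀ k, IsClosed ((L k : Set H))) [∀ k, CompleteSpace (L k)]
    (T : H → H)
    (hT : ∀ y : H, T y = Fin.foldl K (fun w k => (Submodule.orthogonalProjection (L k) w : H)) y)
    (x₀ : H) (hx₀ : ∃ f : Fin K → H, (∀ j, f j ∈ (L j)ᗮ) ∧ x₀ = ∑ j, f j) :
    ∃ c : ℝ, 0 < c ∧ ∀ n : ℕ, 1 ≤ n →
      ‖T^[n] x₀‖ ≤ c * (n : ℝ) ^ (-(1 / (4 * (K : ℝ) * Real.sqrt K + 2))) :=
  alternating_projections_polynomial_rate_general hK L T hT x₀ hx₀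
end
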